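/- arXiv:math/0108133 — 6 statements merged into one kernel-verified Lean document; each statement's English description precedes it below -/
import Mathlib

section
/- The Wronski map is the restriction of a linear projection in Plücker coordinates: for every real m×p matrix K = (k_{j,i}), the determinant of the (m+p)×(m+p) matrix over ℝ[z] whose first p rows are F(z), F′(z), …, F^{(p−1)}(z), where F(z) = (z^{m+p−1}, z^{m+p−2}, …, z, 1) and derivatives are taken entrywise, and whose last m rows form the constant matrix [(k_{j,i}) , I_m] (the j-th of these rows being (k_{j,1}, …, k_{j,p}, e_j) with e_j the j-th standard basis row of ℝ^m), is equal to the Wronskian W(f_{1,K},…,f_{p,K}), where f_{i,K}(z) = z^{m+p−i} − Σ_{j=1}^{m} k_{j,i} z^{m−j}. -/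
open Polynomial

/-- Wronskian of `p` polynomials. -/
noncomputable def wronskian (p : ℕ) (f : Fin p → ℝ[X]) : ℝ[X] :=
  (Matrix.of fun i j : Fin p => derivative^[(i : ℕ)] (f j)).det

/-- `f_{i,K}(z) = z^{m+p-i} - ∑_{j=1}^m k_{j,i} z^{m-j}` (0-based indices). -/
noncomputable def fK (m p : ℕ) (K : Fin m → Fin p → ℝ) (i : Fin p) : ℝ[X] :=
  X ^ (m + p - 1 - (i : ℕ)) - ∑ j : Fin m, C (K j i) * X ^ (m - 1 - (j : ℕ))

/-- The `(m+p)×(m+p)` matrix over `ℝ[z]` whose first `p` rows are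
`F(z), F'(z), …, F^{(p-1)}(z)` with `F(z) = (z^{m+p-1},…,z,1)`, and whose last `m`
rows form the constant matrix `[(k_{j,i}), I_m]`. -/
noncomputable def bigMat (m p : ℕ) (K : Fin m → Fin p → ℝ) :
    Matrix (Fin (m + p)) (Fin (m + p)) ℝ[X] :=
  Matrix.of fun r c =>
    if hr : (r : ℕ) < p then
      derivative^[(r : ℕ)] (X ^ (m + p - 1 - (c : ℕ)))
    else if hc : (c : ℕ) < p then
      C (K ⟨(r : ℕ) - p, by have := r.isLt; omega⟩ ⟨(c : ℕ), hc⟩)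
    else if (c : ℕ) = (r : ℕ) then 1 else 0

/-- The Wronski map is a projection in Plücker coordinates: the determinant of the
matrix with rows `F, F', …, F^{(p-1)}, [K, I]` equals `W(f_{1,K},…,f_{p,K})`. -/
theorem wronski_map_is_projection (m p : ℕ) (hm : 1 ≤ m) (hp : 1 ≤ p)
    (K : Fin m → Fin p → ℝ) :
    (bigMat m p K).det = wronskian p (fK m p K) := by
  set W : Matrix (Fin p) (Fin p) ℝ[X] :=
    Matrix.of fun i j : Fin p => derivative^[(i : ℕ)] (fK m p K j) with hW
  set D : Matrix (Fin p) (Fin m) ℝ[X] :=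
    Matrix.of fun i j => derivative^[(i : ℕ)] (X ^ (m - 1 - (j : ℕ))) with hD
  set K' : Matrix (Fin m) (Fin p) ℝ[X] := Matrix.of fun j i => C (K j i) with hK'
  let e : Fin p ⊕ Fin m ≃ Fin (m + p) :=
    finSumFinEquiv.trans (finCongr (by omega))
  have he1 : ∀ i : Fin p, ((e (Sum.inl i) : Fin (m + p)) : ℕ) = (i : ℕ) := by
    intro i; simp [e, finSumFinEquiv]
  have he2 : ∀ j : Fin m, ((e (Sum.inr j) : Fin (m + p)) : ℕ) = p + (j : ℕ) := by
    intro j; simp [e, finSumFinEquiv]; omega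
  have key : (bigMat m p K).submatrix e e =
      Matrix.fromBlocks W D 0 1 * Matrix.fromBlocks 1 0 K' 1 := by
    rw [Matrix.fromBlocks_multiply]
    apply Matrix.ext
    intro a b
    match a, b with
    | Sum.inl i, Sum.inl j =>
      simp only [Matrix.submatrix_apply, bigMat, Matrix.of_apply, he1, he2,
        i.isLt, dif_pos, Matrix.fromBlocks_apply₁₁, Matrix.add_apply,
        Matrix.mul_apply, Matrix.one_apply, mul_ite, mul_one, mul_zero,
        Finset.sum_ite_eq', Finset.mem_univ, if_true, hW, hD, hK']
      rw [fK, Polynomial.iterate_derivative_sub, Polynomial.iterate_derivative_sum]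
      simp only [Polynomial.iterate_derivative_C_mul]
      rw [show (∑ x : Fin m, derivative^[(i : ℕ)] (X ^ (m - 1 - (x : ℕ))) * C (K x j))
          = ∑ x : Fin m, C (K x j) * derivative^[(i : ℕ)] (X ^ (m - 1 - (x : ℕ))) from
          Finset.sum_congr rfl fun k _ => mul_comm _ _]
      simp
    | Sum.inl i, Sum.inr j =>
      simp only [Matrix.submatrix_apply, bigMat, Matrix.of_apply, he1, he2,
        i.isLt, dif_pos, Matrix.fromBlocks_apply₁₂, Matrix.add_apply,
        Matrix.mul_apply, Matrix.zero_apply, Matrix.one_apply, mul_ite, mul_one,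
        mul_zero, Finset.sum_ite_eq', Finset.mem_univ, if_true, hD,
        Finset.sum_const_zero, zero_add]
      rw [show m + p - 1 - (p + (j : ℕ)) = m - 1 - (j : ℕ) from by omega]
    | Sum.inr i, Sum.inl j =>
      simp only [Matrix.submatrix_apply, bigMat, Matrix.of_apply, he1, he2,
        Matrix.fromBlocks_apply₂₁, Matrix.add_apply, Matrix.mul_apply,
        Matrix.zero_apply, Matrix.one_apply, ite_mul, one_mul, zero_mul,
        Finset.sum_ite_eq, Finset.mem_univ, if_true, hK',
        Finset.sum_const_zero, zero_add, mul_zero]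
      rw [dif_neg (by omega), dif_pos j.isLt]
      exact congrArg C (congrArg₂ K (Fin.ext (by simp)) (Fin.ext rfl))
    | Sum.inr i, Sum.inr j =>
      simp only [Matrix.submatrix_apply, bigMat, Matrix.of_apply, he1, he2,
        Matrix.fromBlocks_apply₂₂, Matrix.add_apply, Matrix.mul_apply,
        Matrix.zero_apply, Matrix.one_apply, mul_zero, zero_mul,
        Finset.sum_const_zero, zero_add, ite_mul, one_mul,
        Finset.sum_ite_eq, Finset.mem_univ, if_true]
      rw [dif_neg (by omega), dif_neg (by omega)]
      by_cases h : i = j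
      · subst h; simp
      · have hne : ¬(p + (j : ℕ) = p + (i : ℕ)) := fun hc => h (Fin.ext (by omega))
        rw [if_neg hne, if_neg h]
  have h1 : (bigMat m p K).det = ((bigMat m p K).submatrix e e).det :=
    (Matrix.det_submatrix_equiv_self e _).symm
  rw [h1, key, Matrix.det_mul, Matrix.det_fromBlocks_zero₂₁,
    Matrix.det_fromBlocks_zero₁₂, Matrix.det_one, Matrix.det_one]
  simp only [mul_one, one_mul]
  rfl
end

section
/- For every real m×p matrix K, the Wronskian W_K = W(f_{1,K},…,f_{p,K}) is a polynomial of degree exactly mp, and its leading coefficient equals (−1)^{p(p−1)/2}·1!·2!⋯(p−1)!, independent of K. (Consequently the Wronski map sends the big cell of the Grassmannian into the big cell of the projective space of polynomials of degree mp.) -/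
open Polynomial

/-- `W_K = W(f_{1,K},…,f_{p,K})`. -/
noncomputable def WK (m p : ℕ) (K : Fin m → Fin p → ℝ) : ℝ[X] :=
  wronskian p (fK m p K)

/-- The constant `L = (-1)^{p(p-1)/2} · 1!·2!⋯(p-1)!`. -/
noncomputable def Lconst (p : ℕ) : ℝ :=
  (-1) ^ (p * (p - 1) / 2) * ∏ i : Fin p, (Nat.factorial i : ℝ)

private lemma coeff_prod_aux {ι : Type*} (s : Finset ι) (f : ι → ℝ[X]) (d : ι → ℕ)
    (h : ∀ i ∈ s, (f i).natDegree ≤ d i) :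
    (∏ i ∈ s, f i).coeff (∑ i ∈ s, d i) = ∏ i ∈ s, (f i).coeff (d i) := by
  induction s using Finset.cons_induction with
  | empty => simp
  | cons a s ha ih =>
    rw [Finset.prod_cons, Finset.sum_cons, Finset.prod_cons,
      ← ih (fun i hi => h i (Finset.mem_cons_of_mem hi)),
      Polynomial.coeff_mul_add_eq_of_natDegree_le (h a (Finset.mem_cons_self a s))
        (le_trans (Polynomial.natDegree_prod_le _ _)
          (Finset.sum_le_sum (fun i hi => h i (Finset.mem_cons_of_mem hi))))]

private lemma prod_Ioc_sub (a k : ℕ) :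
    ∏ j ∈ Finset.Ioc a (a + k), ((a : ℝ) - (j : ℝ)) = (-1) ^ k * (Nat.factorial k : ℝ) := by
  induction k with
  | zero => simp
  | succ k ih =>
    rw [show a + (k + 1) = (a + k) + 1 by ring,
      Finset.prod_Ioc_succ_top (Nat.le_add_right a k), ih, Nat.factorial_succ]
    push_cast
    ring

private lemma vprod (p : ℕ) :
    (∏ i : Fin p, ∏ j ∈ Finset.Ioi i, ((i : ℝ) - (j : ℝ))) = Lconst p := by
  have h1 : ∀ i : Fin p, (∏ j ∈ Finset.Ioi i, ((i : ℝ) - (j : ℝ)))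
      = (-1) ^ (p - 1 - (i : ℕ)) * (Nat.factorial (p - 1 - (i : ℕ)) : ℝ) := by
    intro i
    have hi := i.isLt
    have hmap := Fin.map_valEmbedding_Ioi (a := i)
    have h2 : (∏ j ∈ Finset.Ioi i, ((i : ℝ) - (j : ℝ)))
        = ∏ j ∈ Finset.Ioc (i : ℕ) (p - 1), ((i : ℝ) - (j : ℝ)) := by
      rw [show Finset.Ioc (i : ℕ) (p - 1) = Finset.Ioo (i : ℕ) p by ext; simp; omega,
        ← hmap, Finset.prod_map]
      rfl
    have h3 := prod_Ioc_sub (i : ℕ) (p - 1 - (i : ℕ))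
    rw [show (i : ℕ) + (p - 1 - (i : ℕ)) = p - 1 by omega] at h3
    rw [h2, h3]
  rw [Finset.prod_congr rfl (fun i _ => h1 i)]
  rw [Fin.prod_univ_eq_prod_range (fun i => (-1 : ℝ) ^ (p - 1 - i) * (Nat.factorial (p - 1 - i) : ℝ)) p,
    Finset.prod_mul_distrib, Finset.prod_pow_eq_pow_sum,
    Finset.sum_range_reflect (fun i => i) p, Finset.sum_range_id,
    Finset.prod_range_reflect (fun i => (Nat.factorial i : ℝ)) p]
  unfold Lconst
  rw [Fin.prod_univ_eq_prod_range (fun i => (Nat.factorial i : ℝ)) p]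

/-- For every real `m×p` matrix `K`, the Wronskian `W_K` has degree exactly `mp`
and leading coefficient `(-1)^{p(p-1)/2}·1!·2!⋯(p-1)!`, independent of `K`. -/
theorem WK_degree_leadingCoeff (m p : ℕ) (hm : 1 ≤ m) (hp : 1 ≤ p)
    (K : Fin m → Fin p → ℝ) :
    (WK m p K).degree = (m * p : ℕ) ∧ (WK m p K).leadingCoeff = Lconst p := by
  classical
  set a : Fin p → ℕ := fun j => m + (p - 1 - (j : ℕ)) with ha_def
  set r : Fin p → ℝ[X] := fun j => ∑ j' : Fin m, C (K j' j) * X ^ (m - 1 - (j' : ℕ)) with hr_def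
  have hfK : ∀ j : Fin p, fK m p K j = X ^ (a j) - r j := by
    intro j
    have hj := j.isLt
    rw [fK, show m + p - 1 - (j : ℕ) = a j by simp only [ha_def]; omega]
  have hr : ∀ j : Fin p, (r j).natDegree ≤ m - 1 := by
    intro j
    exact Polynomial.natDegree_sum_le_of_forall_le _ _
      (fun j' _ => (natDegree_C_mul_X_pow_le _ _).trans (by omega))
  have ham : ∀ j : Fin p, m ≤ a j := fun j => Nat.le_add_right _ _
  have hfKdeg : ∀ j : Fin p, (fK m p K j).natDegree ≤ a j := by
    intro j
    rw [hfK]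
    refine (natDegree_sub_le _ _).trans ?_
    rw [natDegree_X_pow]
    exact max_le le_rfl ((hr j).trans (by have := ham j; omega))
  set A : Matrix (Fin p) (Fin p) ℝ[X] :=
    Matrix.of (fun i j : Fin p => derivative^[(i : ℕ)] (fK m p K j)) with hA_def
  set M' : Matrix (Fin p) (Fin p) ℝ[X] :=
    Matrix.of (fun i j : Fin p => (X : ℝ[X]) ^ (i : ℕ) * A i j) with hM'_def
  have hD : ∀ i j : Fin p, derivative^[(i : ℕ)] (fK m p K j)
      = (((a j).descFactorial (i : ℕ) : ℝ)) • X ^ (a j - (i : ℕ))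
        - derivative^[(i : ℕ)] (r j) := by
    intro i j
    rw [hfK, Polynomial.iterate_derivative_sub, Polynomial.iterate_derivative_X_pow_eq_smul]
  -- entrywise facts
  have hdeg : ∀ i j : Fin p, (M' i j).natDegree ≤ a j := by
    intro i j
    simp only [hM'_def, hA_def, Matrix.of_apply]
    by_cases hij : (i : ℕ) ≤ a j
    · refine natDegree_mul_le.trans ?_
      rw [natDegree_X_pow]
      have := (Polynomial.natDegree_iterate_derivative (fK m p K j) (i : ℕ)).trans
        (Nat.sub_le_sub_right (hfKdeg j) _)
      omega
    · rw [Polynomial.iterate_derivative_eq_zero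
        (lt_of_le_of_lt (hfKdeg j) (by omega)), mul_zero]
      simp
  have hcoeff : ∀ i j : Fin p,
      (M' i j).coeff (a j) = ((a j).descFactorial (i : ℕ) : ℝ) := by
    intro i j
    simp only [hM'_def, hA_def, Matrix.of_apply]
    by_cases hij : (i : ℕ) ≤ a j
    · rw [show a j = (a j - (i : ℕ)) + (i : ℕ) by omega, Polynomial.coeff_X_pow_mul,
        hD i j, Polynomial.coeff_sub, Polynomial.coeff_smul, Polynomial.coeff_X_pow,
        if_pos rfl, smul_eq_mul, mul_one]
      have hz : (derivative^[(i : ℕ)] (r j)).coeff (a j - (i : ℕ)) = 0 := by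
        by_cases him : (i : ℕ) < m
        · refine Polynomial.coeff_eq_zero_of_natDegree_lt ?_
          refine lt_of_le_of_lt ((Polynomial.natDegree_iterate_derivative (r j) (i : ℕ)).trans
            (Nat.sub_le_sub_right (hr j) _)) ?_
          have := ham j
          omega
        · rw [Polynomial.iterate_derivative_eq_zero
            (lt_of_le_of_lt (hr j) (by omega))]
          simp
      rw [hz, sub_zero, Nat.sub_add_cancel hij]
    · push_neg at hij
      rw [Polynomial.iterate_derivative_eq_zero (lt_of_le_of_lt (hfKdeg j) hij), mul_zero,
        Nat.descFactorial_eq_zero_iff_lt.mpr hij]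
      simp
  set T : ℕ := ∑ i : Fin p, (i : ℕ) with hT_def
  set S : ℕ := ∑ j : Fin p, a j with hS_def
  have hsum1 : ∑ j : Fin p, (p - 1 - (j : ℕ)) = T := by
    rw [hT_def, Fin.sum_univ_eq_sum_range (fun j => p - 1 - j) p,
      Finset.sum_range_reflect (fun j => j) p,
      Fin.sum_univ_eq_sum_range (fun j => j) p]
  have hS : S = T + m * p := by
    rw [hS_def, ha_def]
    rw [Finset.sum_add_distrib, Finset.sum_const, Finset.card_univ, Fintype.card_fin, hsum1,
      smul_eq_mul]
    ring
  -- det M' = X^T * WK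
  have hMdet : M'.det = X ^ T * WK m p K := by
    have h := Matrix.det_mul_column (fun i : Fin p => (X : ℝ[X]) ^ (i : ℕ)) A
    rw [hM'_def]
    rw [h, Finset.prod_pow_eq_pow_sum]
    rfl
  -- coefficient of det M' at S
  set Dm : Matrix (Fin p) (Fin p) ℝ :=
    Matrix.of (fun i j : Fin p => ((a j).descFactorial (i : ℕ) : ℝ)) with hDm_def
  have hcd : M'.det.coeff S = Dm.det := by
    rw [Matrix.det_apply', Polynomial.finset_sum_coeff, Matrix.det_apply']
    refine Finset.sum_congr rfl fun σ _ => ?_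
    rw [← Polynomial.C_eq_intCast, Polynomial.coeff_C_mul]
    congr 1
    rw [hS_def, coeff_prod_aux Finset.univ _ a (fun i _ => hdeg (σ i) i)]
    exact Finset.prod_congr rfl fun i _ => hcoeff (σ i) i
  have hDm : Dm.det = Lconst p := by
    have htr : Dm = (Matrix.of (fun i j : Fin p =>
        (descPochhammer ℝ (j : ℕ)).eval ((a i : ℕ) : ℝ))).transpose := by
      ext i j
      simp [hDm_def, Matrix.transpose_apply, descPochhammer_eval_eq_descFactorial]
    rw [htr, Matrix.det_transpose,
      ← Matrix.det_eval_matrixOfPolynomials_eq_det_vandermonde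
        (fun i : Fin p => ((a i : ℕ) : ℝ)) (fun i => descPochhammer ℝ (i : ℕ))
        (fun i => descPochhammer_natDegree ℝ (i : ℕ)) (fun i => monic_descPochhammer _ _),
      Matrix.det_vandermonde]
    have key : ∀ i j : Fin p, ((a j : ℕ) : ℝ) - ((a i : ℕ) : ℝ) = (i : ℝ) - (j : ℝ) := by
      intro i j
      have hi : (i : ℕ) ≤ p - 1 := by have := i.isLt; omega
      have hj : (j : ℕ) ≤ p - 1 := by have := j.isLt; omega
      rw [show a j = m + (p - 1 - (j : ℕ)) from rfl, show a i = m + (p - 1 - (i : ℕ)) from rfl]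
      push_cast [Nat.cast_sub hi, Nat.cast_sub hj]
      ring
    rw [Finset.prod_congr rfl fun i _ => Finset.prod_congr rfl fun j _ => key i j]
    exact vprod p
  -- coefficient of WK at m*p
  have hWKcoeff : (WK m p K).coeff (m * p) = Lconst p := by
    have h := hcd.trans hDm
    rwa [hMdet, hS, show T + m * p = m * p + T from add_comm _ _,
      Polynomial.coeff_X_pow_mul] at h
  have hLne : Lconst p ≠ 0 := by
    refine mul_ne_zero (pow_ne_zero _ (by norm_num)) ?_
    refine Finset.prod_ne_zero_iff.mpr fun i _ => ?_
    exact_mod_cast (Nat.factorial_ne_zero _)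
  have hWKne : WK m p K ≠ 0 := by
    intro h
    rw [h] at hWKcoeff
    simp at hWKcoeff
    exact hLne hWKcoeff.symm
  -- degree bound
  have hdegdet : M'.det.degree ≤ (S : WithBot ℕ) := by
    rw [Matrix.det_apply']
    refine (Polynomial.degree_sum_le _ _).trans ?_
    refine Finset.sup_le fun σ _ => ?_
    refine (Polynomial.degree_mul_le _ _).trans ?_
    have h1 : (((Equiv.Perm.sign σ : ℤ) : ℝ[X])).degree ≤ 0 := Polynomial.degree_intCast_le _
    have h2 : (∏ i : Fin p, M' (σ i) i).degree ≤ (S : WithBot ℕ) := by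
      refine (Polynomial.degree_prod_le _ _).trans ?_
      rw [hS_def, Nat.cast_sum]
      exact Finset.sum_le_sum fun i _ =>
        Polynomial.degree_le_natDegree.trans (by exact_mod_cast hdeg (σ i) i)
    calc ((Equiv.Perm.sign σ : ℤ) : ℝ[X]).degree + (∏ i : Fin p, M' (σ i) i).degree
        ≤ 0 + (S : WithBot ℕ) := add_le_add h1 h2
      _ = (S : WithBot ℕ) := zero_add _
  have hnatdet : M'.det.natDegree ≤ S := Polynomial.natDegree_le_iff_degree_le.mpr hdegdet
  have hnatWK : (WK m p K).natDegree ≤ m * p := by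
    have h := hnatdet
    rw [hMdet, Polynomial.natDegree_mul (pow_ne_zero _ Polynomial.X_ne_zero) hWKne, natDegree_X_pow, hS] at h
    omega
  have hdegle : (WK m p K).degree ≤ ((m * p : ℕ) : WithBot ℕ) :=
    Polynomial.natDegree_le_iff_degree_le.mp hnatWK
  have hdeq : (WK m p K).degree = ((m * p : ℕ) : WithBot ℕ) :=
    Polynomial.degree_eq_of_le_of_coeff_ne_zero hdegle (by rw [hWKcoeff]; exact hLne)
  refine ⟨hdeq, ?_⟩
  rw [Polynomial.leadingCoeff, Polynomial.natDegree_eq_of_degree_eq_some hdeq, hWKcoeff]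
end

section
/- The intersection of any finite nonempty collection of thorns in ℝ^n is a thorn: if ε_1,…,ε_r ∈ E, then there exists ε ∈ E such that T(n,ε) = T(n,ε_1) ∩ ⋯ ∩ T(n,ε_r). -/
/-- `ε` belongs to the class `E`: an increasing homeomorphism of `(0,∞)` onto itself
(encoded as a strictly increasing bijection of `(0,∞)` onto `(0,∞)`) with
`ε(t) < t` for all `t > 0`. -/
def IsE (ε : ℝ → ℝ) : Prop :=
  StrictMonoOn ε (Set.Ioi 0) ∧ Set.BijOn ε (Set.Ioi 0) (Set.Ioi 0) ∧
    ∀ t : ℝ, 0 < t → ε t < t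

/-- The thorn `T(n,ε) ⊂ ℝ^n`: all `x` with positive coordinates such that
`x_j < ε(x_{j+1})` for `1 ≤ j ≤ n-1` and `x_n < ε(1)`. -/
def thorn (n : ℕ) (ε : ℝ → ℝ) : Set (Fin n → ℝ) :=
  {x | (∀ j, 0 < x j) ∧
       (∀ j : Fin n, ∀ hj : (j : ℕ) + 1 < n, x j < ε (x ⟨(j : ℕ) + 1, hj⟩)) ∧
       ∀ hn : 0 < n, x ⟨n - 1, Nat.sub_lt hn Nat.one_pos⟩ < ε 1}

/-- The intersection of finitely many thorns in `ℝ^n` is a thorn. -/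
theorem thorn_inter (n : ℕ) (hn : 1 ≤ n) (r : ℕ) (hr : 1 ≤ r)
    (ε : Fin r → ℝ → ℝ) (hε : ∀ i, IsE (ε i)) :
    ∃ ε' : ℝ → ℝ, IsE ε' ∧ thorn n ε' = ⋂ i : Fin r, thorn n (ε i) := by
  have hrne : (Finset.univ : Finset (Fin r)).Nonempty := ⟨⟨0, hr⟩, Finset.mem_univ _⟩
  set m : ℝ → ℝ := fun t => Finset.univ.inf' hrne (fun i => ε i t) with hm
  have hm_eq : ∀ t, ∃ i : Fin r, m t = ε i t := by
    intro t
    obtain ⟨i, _, hi⟩ := Finset.exists_mem_eq_inf' hrne (fun i => ε i t)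
    exact ⟨i, hi⟩
  have hm_le : ∀ (i : Fin r) t, m t ≤ ε i t := fun i t =>
    Finset.inf'_le _ (Finset.mem_univ i)
  have hmono : StrictMonoOn m (Set.Ioi 0) := by
    intro s hs t ht hst
    obtain ⟨i, hi⟩ := hm_eq t
    calc m s ≤ ε i s := hm_le i s
    _ < ε i t := (hε i).1 hs ht hst
    _ = m t := hi.symm
  have hmaps : Set.MapsTo m (Set.Ioi 0) (Set.Ioi 0) := by
    intro t ht
    obtain ⟨i, hi⟩ := hm_eq t
    rw [hi]
    exact (hε i).2.1.1 ht
  have hlt : ∀ t : ℝ, 0 < t → m t < t := by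
    intro t ht
    obtain ⟨i, hi⟩ := hm_eq t
    rw [hi]; exact (hε i).2.2 t ht
  -- continuity of each ε i on Ioi 0, hence of m
  have hcont : ∀ i : Fin r, ∀ a ∈ Set.Ioi (0:ℝ), ContinuousAt (ε i) a := by
    intro i a ha
    refine (hε i).1.continuousAt_of_image_mem_nhds (isOpen_Ioi.mem_nhds ha) ?_
    rw [(hε i).2.1.image_eq]
    exact isOpen_Ioi.mem_nhds ((hε i).2.1.1 ha)
  have hmcont : ∀ a ∈ Set.Ioi (0:ℝ), ContinuousAt m a := by
    intro a ha
    exact ContinuousAt.finset_inf'_apply hrne (fun i _ => hcont i a ha)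
  -- surjectivity
  have hsurj : Set.SurjOn m (Set.Ioi 0) (Set.Ioi 0) := by
    intro y hy
    have hy0 : (0:ℝ) < y := hy
    -- upper bound point b with y ≤ m b
    have hex : ∀ i : Fin r, ∃ t > (0:ℝ), ε i t = y := by
      intro i
      obtain ⟨t, ht, hty⟩ := (hε i).2.1.2.2 hy
      exact ⟨t, ht, hty⟩
    choose t ht hty using hex
    set b : ℝ := Finset.univ.sup' hrne t with hb
    have hb0 : 0 < b := lt_of_lt_of_le (ht ⟨0, hr⟩) (Finset.le_sup' _ (Finset.mem_univ _))
    have hyb : y ≤ m b := by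
      rw [Finset.le_inf'_iff]
      intro i _
      rw [← hty i]
      exact ((hε i).1.monotoneOn (ht i) hb0 (Finset.le_sup' _ (Finset.mem_univ i)))
    have hymy : m y ≤ y := le_of_lt (hlt y hy0)
    have hsub : Set.Icc y b ⊆ Set.Ioi 0 := fun z hz => lt_of_lt_of_le hy0 hz.1
    have hconti : ContinuousOn m (Set.Icc y b) := fun z hz =>
      (hmcont z (hsub hz)).continuousWithinAt
    have hyleb : y ≤ b := hyb.trans (hlt b hb0).le
    obtain ⟨c, hc, hcy⟩ := intermediate_value_Icc hyleb hconti ⟨hymy, hyb⟩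
    exact ⟨c, hsub hc, hcy⟩
  refine ⟨m, ⟨hmono, ⟨hmaps, hmono.injOn, hsurj⟩, hlt⟩, ?_⟩
  ext x
  simp only [Set.mem_iInter, thorn, Set.mem_setOf_eq]
  constructor
  · rintro ⟨hpos, hstep, hlast⟩ i
    refine ⟨hpos, fun j hj => lt_of_lt_of_le (hstep j hj) (hm_le i _),
      fun h => lt_of_lt_of_le (hlast h) (hm_le i 1)⟩
  · intro h
    refine ⟨(h ⟨0, hr⟩).1, fun j hj => ?_, fun hn' => ?_⟩
    · rw [Finset.lt_inf'_iff]
      exact fun i _ => (h i).2.1 j hj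
    · rw [Finset.lt_inf'_iff]
      exact fun i _ => (h i).2.2 hn'
end

section
/- Let T = T(n,ε) be a thorn in ℝ^n with coordinates (x_1,…,x_n), and let U be an open neighborhood in ℝ^{n+1} = {(x_0,x_1,…,x_n)} of the set {0} × T. Then U ∩ (0,∞)^{n+1} contains a thorn T(n+1,ε_1) for some ε_1 ∈ E (with coordinates ordered x_0, x_1, …, x_n). -/
open Set MeasureTheory intervalIntegral in
/-- Lemma 2: if `U` is a neighborhood in `ℝ^{n+1} = {(x_0,x_1,…,x_n)}` of
`{0} × T(n,ε)`, then `U ∩ (0,∞)^{n+1}` contains a thorn `T(n+1,ε₁)`. -/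
theorem thorn_neighborhood (n : ℕ) (hn : 1 ≤ n) (ε : ℝ → ℝ) (hε : IsE ε)
    (U : Set (Fin (n + 1) → ℝ)) (hU : IsOpen U)
    (hTU : ∀ x ∈ thorn n ε, Fin.cons 0 x ∈ U) :
    ∃ ε₁ : ℝ → ℝ, IsE ε₁ ∧
      thorn (n + 1) ε₁ ⊆ U ∩ {y : Fin (n + 1) → ℝ | ∀ j, 0 < y j} := by
  classical
  obtain ⟨hmono, hbij, hlt⟩ := hε
  have hεpos : ∀ t : ℝ, 0 < t → 0 < ε t := fun t ht => hbij.mapsTo ht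
  have hεcont : ContinuousOn ε (Set.Ioi 0) := by
    intro a ha
    refine (hmono.continuousAt_of_image_mem_nhds (isOpen_Ioi.mem_nhds ha)
      ?_).continuousWithinAt
    rw [hbij.image_eq]
    exact isOpen_Ioi.mem_nhds (hεpos a ha)
  -- the closed "obstacle" set
  set p : Fin (n + 1) → ℝ := fun _ => -1 with hp
  set C : Set (Fin (n + 1) → ℝ) := Uᶜ ∪ {p} with hC
  have hCclosed : IsClosed C := hU.isClosed_compl.union isClosed_singleton
  have hCne : C.Nonempty := ⟨p, Or.inr rfl⟩
  set r : (Fin n → ℝ) → ℝ := fun x => Metric.infDist (Fin.cons 0 x) C with hr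
  have hrcont : Continuous r := by
    refine (Metric.continuous_infDist_pt C).comp ?_
    refine continuous_pi fun i => ?_
    refine Fin.cases ?_ (fun j => ?_) i
    · simpa using (continuous_const : Continuous fun _ : Fin n → ℝ => (0:ℝ))
    · simpa using continuous_apply j
  have hrnonneg : ∀ x, 0 ≤ r x := fun x => Metric.infDist_nonneg
  have hrpos : ∀ x ∈ thorn n ε, 0 < r x := by
    intro x hx
    refine (hCclosed.notMem_iff_infDist_pos hCne).mp ?_
    rintro (h | h)
    · exact h (hTU x hx)
    · have := congrFun (Set.mem_singleton_iff.mp h) 0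
      simp [hp, Fin.cons_zero] at this
  have hn0 : 0 < n := hn
  set lastI : Fin n := ⟨n - 1, Nat.sub_lt hn0 Nat.one_pos⟩ with hlastI
  set K : ℝ → Set (Fin n → ℝ) := fun s =>
    {x | (∀ j, s ≤ x j) ∧ (∀ j, x j ≤ 1) ∧
      (∀ (j : Fin n) (hj : (j : ℕ) + 1 < n),
        x j ≤ ε (max (x ⟨(j : ℕ) + 1, hj⟩) s) / 2) ∧
      x lastI ≤ ε 1 / 2} with hKdef
  have hKcompact : ∀ s : ℝ, 0 < s → IsCompact (K s) := by
    intro s hs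
    have hsub : K s ⊆ Set.pi Set.univ fun _ : Fin n => Set.Icc s 1 := by
      intro x hx j _
      exact ⟨hx.1 j, hx.2.1 j⟩
    refine IsCompact.of_isClosed_subset (isCompact_univ_pi fun _ => isCompact_Icc) ?_ hsub
    have e1 : IsClosed {x : Fin n → ℝ | ∀ j, s ≤ x j} := by
      rw [Set.setOf_forall]
      exact isClosed_iInter fun j => isClosed_le continuous_const (continuous_apply j)
    have e2 : IsClosed {x : Fin n → ℝ | ∀ j, x j ≤ 1} := by
      rw [Set.setOf_forall]
      exact isClosed_iInter fun j => isClosed_le (continuous_apply j) continuous_const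
    have e3 : IsClosed {x : Fin n → ℝ | ∀ (j : Fin n) (hj : (j : ℕ) + 1 < n),
        x j ≤ ε (max (x ⟨(j : ℕ) + 1, hj⟩) s) / 2} := by
      rw [Set.setOf_forall]
      refine isClosed_iInter fun j => ?_
      rw [Set.setOf_forall]
      refine isClosed_iInter fun hj => ?_
      refine isClosed_le (continuous_apply j) ?_
      have hc : Continuous fun x : Fin n → ℝ => ε (max (x ⟨(j : ℕ) + 1, hj⟩) s) := by
        refine hεcont.comp_continuous ((continuous_apply _).max continuous_const) ?_
        intro x
        exact lt_of_lt_of_le hs (le_max_right _ _)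
      exact hc.div_const 2
    have e4 : IsClosed {x : Fin n → ℝ | x lastI ≤ ε 1 / 2} :=
      isClosed_le (continuous_apply lastI) continuous_const
    exact (e1.inter (e2.inter (e3.inter e4)))
  have hKanti : ∀ s t : ℝ, s ≤ t → K t ⊆ K s := by
    intro s t hst x hx
    obtain ⟨h1, h2, h3, h4⟩ := hx
    refine ⟨fun j => hst.trans (h1 j), h2, ?_, h4⟩
    intro j hj
    have hm1 : max (x ⟨(j : ℕ) + 1, hj⟩) s = x ⟨(j : ℕ) + 1, hj⟩ :=
      max_eq_left (hst.trans (h1 _))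
    have hm2 : max (x ⟨(j : ℕ) + 1, hj⟩) t = x ⟨(j : ℕ) + 1, hj⟩ :=
      max_eq_left (h1 _)
    rw [hm1]
    have := h3 j hj
    rwa [hm2] at this
  have hKT : ∀ s : ℝ, 0 < s → K s ⊆ thorn n ε := by
    intro s hs x hx
    obtain ⟨h1, h2, h3, h4⟩ := hx
    have hxpos : ∀ j, 0 < x j := fun j => lt_of_lt_of_le hs (h1 j)
    refine ⟨hxpos, ?_, ?_⟩
    · intro j hj
      have h5 := h3 j hj
      rw [max_eq_left (h1 _)] at h5
      have h6 : 0 < ε (x ⟨(j : ℕ) + 1, hj⟩) := hεpos _ (hxpos _)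
      linarith
    · intro _
      have h6 : 0 < ε 1 := hεpos 1 one_pos
      have h7 : x ⟨n - 1, Nat.sub_lt hn0 Nat.one_pos⟩ ≤ ε 1 / 2 := h4
      linarith
  set d : ℝ → ℝ := fun s => sInf (insert 1 (r '' K s)) with hd
  have hdBdd : ∀ s : ℝ, BddBelow (insert 1 (r '' K s)) := by
    intro s
    refine ⟨0, ?_⟩
    rintro y hy
    rcases Set.mem_insert_iff.mp hy with rfl | ⟨x, _, rfl⟩
    · exact zero_le_one
    · exact hrnonneg x
  have hdnonneg : ∀ s : ℝ, 0 ≤ d s := by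
    intro s
    refine le_csInf ⟨1, Set.mem_insert _ _⟩ ?_
    rintro y hy
    rcases Set.mem_insert_iff.mp hy with rfl | ⟨x, _, rfl⟩
    · exact zero_le_one
    · exact hrnonneg x
  have hdpos : ∀ s : ℝ, 0 < s → 0 < d s := by
    intro s hs
    have hcpt : IsCompact (insert 1 (r '' K s)) := ((hKcompact s hs).image hrcont).insert 1
    have hne : (insert 1 (r '' K s)).Nonempty := ⟨1, Set.mem_insert _ _⟩
    have hmem := hcpt.sInf_mem hne
    rcases Set.mem_insert_iff.mp hmem with h | h
    · rw [hd]; simp only []; rw [h]; exact one_pos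
    · obtain ⟨x, hxK, hxr⟩ := h
      have := hrpos x (hKT s hs hxK)
      rw [hd]; simp only []; rw [← hxr]; exact this
  have hdmono : ∀ s t : ℝ, s ≤ t → d s ≤ d t := by
    intro s t hst
    exact csInf_le_csInf (hdBdd s) ⟨1, Set.mem_insert _ _⟩
      (Set.insert_subset_insert (Set.image_mono (f := r) (hKanti s t hst)))
  set m : ℝ → ℝ := fun u => if u ≤ 0 then 0 else min (d u) 1 / 2 with hm
  have hmnonneg : ∀ u, 0 ≤ m u := by
    intro u
    rw [hm]; simp only []
    split
    · exact le_refl 0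
    · exact div_nonneg (le_min (hdnonneg u) zero_le_one) (by norm_num)
  have hmle : ∀ u, m u ≤ 1 / 2 := by
    intro u
    rw [hm]; simp only []
    split
    · norm_num
    · have : min (d u) 1 ≤ 1 := min_le_right _ _
      linarith
  have hmpos : ∀ u : ℝ, 0 < u → 0 < m u := by
    intro u hu
    rw [hm]; simp only []
    rw [if_neg (not_le.mpr hu)]
    have := hdpos u hu
    have h1 : 0 < min (d u) 1 := lt_min this one_pos
    linarith
  have hmled : ∀ u : ℝ, 0 < u → m u ≤ d u := by
    intro u hu
    rw [hm]; simp only []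
    rw [if_neg (not_le.mpr hu)]
    have h1 : min (d u) 1 ≤ d u := min_le_left _ _
    have := hdnonneg u
    linarith
  have hmmono : Monotone m := by
    intro a b hab
    by_cases ha : a ≤ 0
    · rw [hm]; simp only []
      rw [if_pos ha]
      exact hmnonneg b
    · have ha' : 0 < a := not_le.mp ha
      have hb : ¬ b ≤ 0 := not_le.mpr (lt_of_lt_of_le ha' hab)
      rw [hm]; simp only []
      rw [if_neg ha, if_neg hb]
      have : d a ≤ d b := hdmono a b hab
      have h2 : min (d a) 1 ≤ min (d b) 1 := min_le_min this le_rfl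
      linarith
  have hmint : ∀ a b : ℝ, IntervalIntegrable m volume a b := fun a b =>
    hmmono.intervalIntegrable
  set g : ℝ → ℝ := fun t => ∫ u in (0:ℝ)..t, m u with hg
  have hgcont : Continuous g := intervalIntegral.continuous_primitive hmint 0
  have hkey : ∀ u v : ℝ, u ≤ v → (v - u) * m u ≤ g v - g u := by
    intro u v huv
    have hadd := intervalIntegral.integral_add_adjacent_intervals (hmint 0 u) (hmint u v)
    have hle : (∫ _ in u..v, m u) ≤ ∫ w in u..v, m w := by
      refine intervalIntegral.integral_mono_on huv intervalIntegrable_const (hmint u v) ?_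
      intro w hw
      exact hmmono hw.1
    rw [intervalIntegral.integral_const, smul_eq_mul] at hle
    rw [hg]; simp only []
    linarith
  have hkey2 : ∀ u v : ℝ, u ≤ v → g v - g u ≤ (v - u) * m v := by
    intro u v huv
    have hadd := intervalIntegral.integral_add_adjacent_intervals (hmint 0 u) (hmint u v)
    have hle : (∫ w in u..v, m w) ≤ ∫ _ in u..v, m v := by
      refine intervalIntegral.integral_mono_on huv (hmint u v) intervalIntegrable_const ?_
      intro w hw
      exact hmmono hw.2
    rw [intervalIntegral.integral_const, smul_eq_mul] at hle
    rw [hg]; simp only []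
    linarith
  have hg0 : g 0 = 0 := intervalIntegral.integral_same
  have hgsm : StrictMonoOn g (Set.Ici 0) := by
    intro a ha b hb hab
    have hc0 : (0:ℝ) < (a + b) / 2 := by
      have := lt_of_le_of_lt ha hab
      rcases lt_or_eq_of_le (Set.mem_Ici.mp ha) with h | h
      · positivity
      · rw [← h]; linarith
    have h1 : 0 ≤ g ((a + b) / 2) - g a := by
      have := hkey a ((a + b) / 2) (by linarith)
      nlinarith [hmnonneg a]
    have h2 : ((b - (a + b) / 2)) * m ((a + b) / 2) ≤ g b - g ((a + b) / 2) :=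
      hkey ((a + b) / 2) b (by linarith)
    have h3 : 0 < (b - (a + b) / 2) * m ((a + b) / 2) :=
      mul_pos (by linarith) (hmpos _ hc0)
    linarith
  have hgpos : ∀ t : ℝ, 0 < t → 0 < g t := by
    intro t ht
    have := hgsm (Set.self_mem_Ici) (Set.mem_Ici.mpr ht.le) ht
    rwa [hg0] at this
  have hghalf : ∀ t : ℝ, 0 < t → g t ≤ t / 2 := by
    intro t ht
    have h1 := hkey2 0 t ht.le
    have h2 := hmle t
    rw [hg0] at h1
    nlinarith
  set ε₁ : ℝ → ℝ := fun t => min (g t) (ε t / 2) with hε₁def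
  have hε₁pos : ∀ t : ℝ, 0 < t → 0 < ε₁ t := fun t ht =>
    lt_min (hgpos t ht) (half_pos (hεpos t ht))
  have hε₁lt : ∀ t : ℝ, 0 < t → ε₁ t < t := by
    intro t ht
    have h1 : ε₁ t ≤ g t := min_le_left _ _
    have h2 := hghalf t ht
    linarith
  have hε₁sm : StrictMonoOn ε₁ (Set.Ioi 0) := by
    intro a ha b hb hab
    refine lt_min ?_ ?_
    · exact (min_le_left _ _).trans_lt (hgsm (Set.mem_Ici.mpr (le_of_lt (Set.mem_Ioi.mp ha))) (Set.mem_Ici.mpr (le_of_lt (Set.mem_Ioi.mp hb))) hab)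
    · refine (min_le_right _ _).trans_lt ?_
      have := hmono ha hb hab
      linarith
  have hε₁cont : ContinuousOn ε₁ (Set.Ioi 0) :=
    (hgcont.continuousOn).inf' (hεcont.div_const 2)
  have hε₁surj : Set.SurjOn ε₁ (Set.Ioi 0) (Set.Ioi 0) := by
    intro y hy
    have hy' : (0:ℝ) < y := hy
    obtain ⟨b₁, hb₁, hb₁e⟩ := hbij.surjOn (show (2*y : ℝ) ∈ Set.Ioi 0 by
      simp; linarith)
    have hm1 : 0 < m 1 := hmpos 1 one_pos
    set b₂ : ℝ := 1 + (y + 1) / m 1 with hb₂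
    have hquot : 0 < (y + 1) / m 1 := div_pos (by linarith) hm1
    have hb₂pos : (0:ℝ) < b₂ := by rw [hb₂]; linarith
    set b : ℝ := max (max b₁ b₂) y with hb
    have hbb₁ : b₁ ≤ b := le_trans (le_max_left _ _) (le_max_left _ _)
    have hbb₂ : b₂ ≤ b := le_trans (le_max_right _ _) (le_max_left _ _)
    have hby : y ≤ b := le_max_right _ _
    have hbpos : 0 < b := lt_of_lt_of_le hy' hby
    have hgb : y ≤ g b := by
      have h1 : (b₂ - 1) * m 1 ≤ g b₂ - g 1 := hkey 1 b₂ (by rw [hb₂]; linarith)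
      have h2 : (b₂ - 1) * m 1 = y + 1 := by
        rw [hb₂]
        field_simp
        ring
      have h3 : 0 < g 1 := hgpos 1 one_pos
      have h4 : g b₂ ≤ g b := by
        rcases eq_or_lt_of_le hbb₂ with h | h
        · rw [h]
        · exact le_of_lt (hgsm (le_of_lt hb₂pos) (le_of_lt hbpos) h)
      linarith
    have hεb : y ≤ ε b / 2 := by
      have h1 : ε b₁ ≤ ε b := by
        rcases eq_or_lt_of_le hbb₁ with h | h
        · rw [h]
        · exact le_of_lt (hmono hb₁ (Set.mem_Ioi.mpr hbpos) h)
      linarith [hb₁e]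
    have hab : y ≤ b := hby
    have hcont : ContinuousOn ε₁ (Set.Icc y b) := hε₁cont.mono (by
      intro t ht
      exact lt_of_lt_of_le hy' ht.1)
    have hmem : y ∈ Set.Icc (ε₁ y) (ε₁ b) := by
      constructor
      · have := hghalf y hy'
        have h1 : ε₁ y ≤ g y := min_le_left _ _
        linarith
      · exact le_min hgb hεb
    obtain ⟨t, htmem, hteq⟩ := intermediate_value_Icc hab hcont hmem
    exact ⟨t, lt_of_lt_of_le hy' htmem.1, hteq⟩
  have hε₁E : IsE ε₁ :=
    ⟨hε₁sm, ⟨fun t ht => hε₁pos t ht, hε₁sm.injOn, hε₁surj⟩, hε₁lt⟩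
  refine ⟨ε₁, hε₁E, ?_⟩
  intro y hy
  obtain ⟨hy1, hy2, hy3⟩ := hy
  refine Set.mem_inter ?_ hy1
  -- key facts about coordinates of y
  have hylt1 : ∀ (k : ℕ) (hk : k < n + 1), y ⟨k, hk⟩ < 1 := by
    have aux : ∀ (i k : ℕ) (hk : k < n + 1), n - k = i → y ⟨k, hk⟩ < 1 := by
      intro i
      induction i with
      | zero =>
        intro k hk hnk
        have h3 := hy3 (Nat.succ_pos n)
        have h4 : ε₁ 1 < 1 := hε₁lt 1 one_pos
        have hidx : (⟨k, hk⟩ : Fin (n + 1)) =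
            ⟨n + 1 - 1, Nat.sub_lt (Nat.succ_pos n) Nat.one_pos⟩ :=
          Fin.ext (show k = n + 1 - 1 by omega)
        rw [hidx]
        exact lt_trans h3 h4
      | succ i ih =>
        intro k hk hnk
        have hk1 : k + 1 < n + 1 := by omega
        have h2 := hy2 ⟨k, hk⟩ (by simpa using hk1)
        have hnext := ih (k + 1) hk1 (by omega)
        have hpos := hy1 ⟨k + 1, hk1⟩
        have h5 := hε₁lt _ hpos
        calc y ⟨k, hk⟩ < ε₁ (y ⟨k + 1, hk1⟩) := h2
          _ < y ⟨k + 1, hk1⟩ := h5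
          _ < 1 := hnext
    intro k hk
    exact aux (n - k) k hk rfl
  have hymono : ∀ (k : ℕ) (h1 : 1 ≤ k) (hk : k < n + 1),
      y ⟨1, by omega⟩ ≤ y ⟨k, hk⟩ := by
    intro k
    induction k with
    | zero => intro h1; omega
    | succ k ih =>
      intro h1 hk
      rcases Nat.lt_or_ge 1 (k + 1) with h | h
      · have hk' : k < n + 1 := by omega
        have h1k : 1 ≤ k := by omega
        have step : y ⟨k, hk'⟩ < y ⟨k + 1, hk⟩ := by
          have h2 := hy2 ⟨k, hk'⟩ (by simpa using hk)
          exact lt_trans h2 (hε₁lt _ (hy1 ⟨k + 1, hk⟩))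
        exact le_trans (ih h1k hk') step.le
      · have : k = 0 := by omega
        subst this
        exact le_refl _
  set x : Fin n → ℝ := Fin.tail y with hx
  have hxj : ∀ j : Fin n, x j = y ⟨(j : ℕ) + 1, by omega⟩ := by
    intro j
    rfl
  have hs₀pos : 0 < x ⟨0, hn0⟩ := by
    rw [hxj]
    exact hy1 _
  have hs₀le : ∀ j, x ⟨0, hn0⟩ ≤ x j := by
    intro j
    rw [hxj ⟨0, hn0⟩, hxj j]
    exact hymono ((j : ℕ) + 1) (by omega) (by omega)
  have hs₀lt1 : x ⟨0, hn0⟩ < 1 := by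
    rw [hxj]
    exact hylt1 _ _
  have hxK : x ∈ K (x ⟨0, hn0⟩) := by
    refine ⟨hs₀le, ?_, ?_, ?_⟩
    · intro j
      rw [hxj]
      exact (hylt1 _ _).le
    · intro j hj
      have hmax : max (x ⟨(j : ℕ) + 1, hj⟩) (x ⟨0, hn0⟩) = x ⟨(j : ℕ) + 1, hj⟩ :=
        max_eq_left (hs₀le _)
      rw [hmax, hxj j, hxj ⟨(j : ℕ) + 1, hj⟩]
      have h2 := hy2 ⟨(j : ℕ) + 1, by omega⟩ (by simpa using (by omega : (j:ℕ) + 1 + 1 < n + 1))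
      have h3 : ε₁ (y ⟨(j : ℕ) + 1 + 1, by omega⟩) ≤ ε (y ⟨(j : ℕ) + 1 + 1, by omega⟩) / 2 :=
        min_le_right _ _
      exact le_of_lt (lt_of_lt_of_le h2 h3)
    · have hlv : x lastI = y ⟨(n - 1) + 1, by omega⟩ := hxj lastI
      have hidx : (⟨(n - 1) + 1, by omega⟩ : Fin (n + 1)) = ⟨n, by omega⟩ := by
        apply Fin.ext
        simp
        omega
      rw [hlv, hidx]
      have h3 := hy3 (Nat.succ_pos n)
      have h4 : ε₁ 1 ≤ ε 1 / 2 := min_le_right _ _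
      exact le_of_lt (lt_of_lt_of_le h3 h4)
  -- the crucial estimate
  have hgled : g (x ⟨0, hn0⟩) ≤ d (x ⟨0, hn0⟩) := by
    have h1 : g (x ⟨0, hn0⟩) - g 0 ≤ (x ⟨0, hn0⟩ - 0) * m (x ⟨0, hn0⟩) := by
      have := hkey2 0 (x ⟨0, hn0⟩) hs₀pos.le
      simpa using this
    rw [hg0] at h1
    have h2 : (x ⟨0, hn0⟩) * m (x ⟨0, hn0⟩) ≤ 1 * m (x ⟨0, hn0⟩) :=
      mul_le_mul_of_nonneg_right hs₀lt1.le (hmnonneg _)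
    have h3 := hmled (x ⟨0, hn0⟩) hs₀pos
    nlinarith
  have hdler : d (x ⟨0, hn0⟩) ≤ r x :=
    csInf_le (hdBdd _) (Set.mem_insert_iff.mpr (Or.inr ⟨x, hxK, rfl⟩))
  have hy0r : y ⟨0, by omega⟩ < r x := by
    have h0 := hy2 ⟨0, by omega⟩ (by simpa using (by omega : (0:ℕ) + 1 < n + 1))
    have h1 : ε₁ (y ⟨0 + 1, by omega⟩) ≤ g (y ⟨0 + 1, by omega⟩) := min_le_left _ _
    have h2 : y ⟨0 + 1, by omega⟩ = x ⟨0, hn0⟩ := (hxj ⟨0, hn0⟩).symm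
    rw [h2] at h0 h1
    linarith
  -- conclude y ∈ U
  by_contra hyU
  have hyC : y ∈ C := Or.inl hyU
  have hyeq : Fin.cons (y 0) x = y := by
    rw [hx]
    exact Fin.cons_self_tail y
  have hy00 : y 0 = y ⟨0, by omega⟩ := congrArg y (Fin.ext (by simp))
  have hdist : dist (Fin.cons (0:ℝ) x : Fin (n+1) → ℝ) (Fin.cons (y 0) x : Fin (n+1) → ℝ) ≤ y ⟨0, by omega⟩ := by
    refine (dist_pi_le_iff (hy1 _).le).mpr ?_
    intro i
    refine Fin.cases ?_ (fun j => ?_) i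
    · simp only [Fin.cons_zero]
      rw [Real.dist_eq, abs_sub_comm, sub_zero, abs_of_nonneg (hy1 0).le, hy00]
    · simp only [Fin.cons_succ, dist_self]
      exact (hy1 _).le
  rw [hyeq] at hdist
  have hfin : r x ≤ dist (Fin.cons 0 x) y := Metric.infDist_le_dist_of_mem hyC
  linarith
end

section
/- The quantity I(m,p) is symmetric in m and p: for all integers m, p ≥ 1, |Σ_{σ ∈ Σ_{m,p}} (−1)^{inv σ}| = |Σ_{τ ∈ Σ_{p,m}} (−1)^{inv τ}|, i.e. I(m,p) = I(p,m). -/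
/-- Ballot sequences of type `(m,p)`. -/
def IsBallot (m p : ℕ) (σ : Fin (m * p) → Fin p) : Prop :=
  (∀ i : Fin p, (Finset.univ.filter fun j => σ j = i).card = m) ∧
  ∀ n : Fin (m * p), ∀ i k : Fin p, i < k →
    (Finset.univ.filter fun j => j ≤ n ∧ σ j = k).card ≤
      (Finset.univ.filter fun j => j ≤ n ∧ σ j = i).card

/-- The number of inversions of a sequence. -/
def invCount (m p : ℕ) (σ : Fin (m * p) → Fin p) : ℕ :=
  (Finset.univ.filter fun jk : Fin (m * p) × Fin (m * p) =>
    jk.1 < jk.2 ∧ σ jk.2 < σ jk.1).card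

open scoped Classical in
/-- `S(m,p) = ∑_{σ ∈ Σ_{m,p}} (-1)^{inv σ}`. -/
noncomputable def ballotSum (m p : ℕ) : ℤ :=
  ∑ σ : Fin (m * p) → Fin p, if IsBallot m p σ then (-1 : ℤ) ^ invCount m p σ else 0

namespace BallotAux
open Finset

variable {N q m : ℕ}

/-- number of earlier occurrences of the same value: the "column index". -/
def colN (σ : Fin N → Fin q) (j : Fin N) : ℕ :=
  (Finset.univ.filter fun i => i < j ∧ σ i = σ j).card

/-- generalized ballot condition -/
def BallotG (m : ℕ) (σ : Fin N → Fin q) : Prop :=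
  (∀ i : Fin q, (Finset.univ.filter fun j => σ j = i).card = m) ∧
  ∀ n : Fin N, ∀ i k : Fin q, i < k →
    (Finset.univ.filter fun j => j ≤ n ∧ σ j = k).card ≤
      (Finset.univ.filter fun j => j ≤ n ∧ σ j = i).card

lemma isBallot_iff (m p : ℕ) (σ : Fin (m*p) → Fin p) : IsBallot m p σ ↔ BallotG m σ := Iff.rfl

variable {σ : Fin N → Fin q}

lemma col_lt (hσ : BallotG m σ) (j : Fin N) : colN σ j < m := by
  rw [← hσ.1 (σ j)]
  apply Finset.card_lt_card
  constructor
  · intro i hi; simp only [mem_filter, mem_univ, true_and] at hi ⊢; exact hi.2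
  · intro h
    have := h (by simp : j ∈ _)
    simp only [mem_filter, mem_univ, true_and] at this
    exact absurd this.1 (lt_irrefl j)

lemma col_lt_col {j k : Fin N} (h : σ j = σ k) (hjk : j < k) : colN σ j < colN σ k := by
  apply Finset.card_lt_card
  constructor
  · intro i hi; simp only [mem_filter, mem_univ, true_and] at hi ⊢
    exact ⟨hi.1.trans hjk, hi.2.trans h⟩
  · intro hs
    have := hs (by simp [hjk, h] : j ∈ _)
    simp only [mem_filter, mem_univ, true_and] at this
    exact absurd this.1 (lt_irrefl j)

lemma col_lt_iff {j k : Fin N} (h : σ j = σ k) : colN σ j < colN σ k ↔ j < k := by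
  constructor
  · intro hc
    rcases lt_trichotomy j k with h1 | h1 | h1
    · exact h1
    · exact absurd hc (by rw [h1]; omega)
    · exact absurd (col_lt_col h.symm h1) (by omega)
  · exact col_lt_col h

lemma cell_inj {j k : Fin N} (h1 : σ j = σ k) (h2 : colN σ j = colN σ k) : j = k := by
  rcases lt_trichotomy j k with h | h | h
  · exact absurd (col_lt_col h1 h) (by omega)
  · exact h
  · exact absurd (col_lt_col h1.symm h) (by omega)

def cellF (hσ : BallotG m σ) : Fin N → Fin q × Fin m :=
  fun j => (σ j, ⟨colN σ j, col_lt hσ j⟩)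

lemma card_eq (hσ : BallotG m σ) : q * m = N := by
  have h : ∑ i : Fin q, (Finset.univ.filter fun j => σ j = i).card = N := by
    have h2 := Finset.card_eq_sum_card_fiberwise (f := σ) (s := Finset.univ)
      (t := Finset.univ) (fun x _ => Finset.mem_univ (σ x))
    simpa using h2.symm
  calc q * m = ∑ _i : Fin q, m := by simp [mul_comm]
  _ = N := by rw [← h]; exact Finset.sum_congr rfl fun i _ => (hσ.1 i).symm

lemma cellF_bij (hσ : BallotG m σ) : Function.Bijective (cellF hσ) := by
  rw [Fintype.bijective_iff_injective_and_card]
  constructor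
  · intro j k hjk
    simp only [cellF, Prod.mk.injEq, Fin.mk.injEq] at hjk
    exact cell_inj hjk.1 hjk.2
  · simp [card_eq hσ]

noncomputable def EF (hσ : BallotG m σ) : Fin q × Fin m → Fin N :=
  (Equiv.ofBijective _ (cellF_bij hσ)).symm

lemma cellF_EF (hσ : BallotG m σ) (x : Fin q × Fin m) : cellF hσ (EF hσ x) = x :=
  (Equiv.ofBijective _ (cellF_bij hσ)).apply_symm_apply x

lemma sigma_EF (hσ : BallotG m σ) (x : Fin q × Fin m) : σ (EF hσ x) = x.1 := by
  exact congrArg Prod.fst (cellF_EF hσ x)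

lemma col_EF (hσ : BallotG m σ) (x : Fin q × Fin m) : colN σ (EF hσ x) = x.2 := by
  have h : (cellF hσ (EF hσ x)).2 = x.2 := by rw [cellF_EF hσ x]
  simpa [cellF] using congrArg Fin.val h

lemma EF_cellF (hσ : BallotG m σ) (j : Fin N) : EF hσ (cellF hσ j) = j :=
  (Equiv.ofBijective _ (cellF_bij hσ)).symm_apply_apply j

lemma count_le_self (k : Fin N) :
    (Finset.univ.filter fun i => i ≤ k ∧ σ i = σ k).card = colN σ k + 1 := by
  have h : (Finset.univ.filter fun i => i ≤ k ∧ σ i = σ k)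
      = insert k (Finset.univ.filter fun i => i < k ∧ σ i = σ k) := by
    ext i
    simp only [mem_filter, mem_univ, true_and, mem_insert]
    constructor
    · rintro ⟨h1, h2⟩
      rcases eq_or_lt_of_le h1 with h3 | h3
      · exact Or.inl h3
      · exact Or.inr ⟨h3, h2⟩
    · rintro (rfl | ⟨h1, h2⟩)
      · exact ⟨le_refl _, rfl⟩
      · exact ⟨le_of_lt h1, h2⟩
  rw [h, Finset.card_insert_of_notMem (by simp), colN]

lemma col_mono (hσ : BallotG m σ) {j k : Fin N} (h : σ j < σ k)
    (hc : colN σ j = colN σ k) : j < k := by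
  by_contra hcon
  push_neg at hcon
  have hne : k ≠ j := fun he => by rw [he] at h; exact lt_irrefl _ h
  have hkj : k < j := lt_of_le_of_ne hcon hne
  have b2 := hσ.2 k (σ j) (σ k) h
  rw [count_le_self] at b2
  have hsub : (Finset.univ.filter fun i => i ≤ k ∧ σ i = σ j).card ≤ colN σ j := by
    apply Finset.card_le_card
    intro i hi
    simp only [mem_filter, mem_univ, true_and] at hi ⊢
    exact ⟨lt_of_le_of_lt hi.1 hkj, hi.2⟩
  omega

lemma lt_of_cell_le (hσ : BallotG m σ) {j k : Fin N} (h1 : σ j ≤ σ k)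
    (h2 : colN σ j ≤ colN σ k) (h3 : j ≠ k) : j < k := by
  rcases eq_or_lt_of_le h1 with he | hlt
  · have hcne : colN σ j ≠ colN σ k := fun hc => h3 (cell_inj he hc)
    exact (col_lt_iff he).mp (lt_of_le_of_ne h2 hcne)
  · rcases eq_or_lt_of_le h2 with hce | hclt
    · exact col_mono hσ hlt hce
    · set E' := EF hσ (σ k, ⟨colN σ j, col_lt hσ j⟩) with hE'
      have hsE : σ E' = σ k := sigma_EF hσ _
      have hcE : colN σ E' = colN σ j := col_EF hσ _
      have h4 : j < E' := col_mono hσ (by rw [hsE]; exact hlt) hcE.symm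
      have h5 : E' < k := (col_lt_iff hsE).mp (by rw [hcE]; exact hclt)
      exact h4.trans h5

lemma EF_inj (hσ : BallotG m σ) {x y : Fin q × Fin m} (h : EF hσ x = EF hσ y) : x = y :=
  (Equiv.ofBijective _ (cellF_bij hσ)).symm.injective h


/-- the transposed sequence, over the same index type -/
def tcol (hσ : BallotG m σ) : Fin N → Fin m := fun j => ⟨colN σ j, col_lt hσ j⟩

lemma ballot_tcol (hσ : BallotG m σ) : BallotG q (tcol hσ) := by
  constructor
  · intro c
    have h1 : (Finset.univ.filter fun j => tcol hσ j = c).card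
        = (Finset.univ.filter fun x : Fin q × Fin m => x.2 = c).card := by
      apply Finset.card_equiv (Equiv.ofBijective _ (cellF_bij hσ))
      intro j
      simp only [mem_filter, mem_univ, true_and, Equiv.ofBijective_apply]
      exact Iff.rfl
    have h2 : (Finset.univ.filter fun x : Fin q × Fin m => x.2 = c)
        = Finset.univ ×ˢ {c} := by
      ext x
      simp only [mem_filter, mem_univ, true_and, Finset.mem_product, mem_singleton]
    rw [h1, h2]; simp
  · intro n c c' hcc'
    apply Finset.card_le_card_of_injOn (fun j => EF hσ (σ j, c))
    · intro j hj
      simp only [Finset.mem_coe, mem_filter, mem_univ, true_and] at hj ⊢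
      have hs : σ (EF hσ (σ j, c)) = σ j := sigma_EF hσ _
      have hc : colN σ (EF hσ (σ j, c)) = c := col_EF hσ _
      have hlt : EF hσ (σ j, c) < j := by
        apply (col_lt_iff hs).mp
        rw [hc]
        have hv : colN σ j = (c' : ℕ) := congrArg Fin.val hj.2
        rw [hv]; exact hcc'
      exact ⟨le_trans (le_of_lt hlt) hj.1, Fin.ext hc⟩
    · intro j hj j' hj' he
      simp only [coe_filter, mem_univ, true_and, Set.mem_setOf_eq] at hj hj'
      have h1 : (σ j, c) = (σ j', c) := EF_inj hσ he
      have h2 : σ j = σ j' := (Prod.ext_iff.mp h1).1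
      have h3 : colN σ j = colN σ j' := by
        have a1 : colN σ j = (c' : ℕ) := congrArg Fin.val hj.2
        have a2 : colN σ j' = (c' : ℕ) := congrArg Fin.val hj'.2
        rw [a1, a2]
      exact cell_inj h2 h3

lemma col_tcol (hσ : BallotG m σ) (j : Fin N) : colN (tcol hσ) j = (σ j : ℕ) := by
  have hset : (Finset.univ.filter fun i => i < j ∧ tcol hσ i = tcol hσ j)
      = (Finset.univ.filter fun r : Fin q => r < σ j).image
          (fun r => EF hσ (r, tcol hσ j)) := by
    ext i
    simp only [mem_filter, mem_univ, true_and, mem_image]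
    constructor
    · rintro ⟨h1, h2⟩
      refine ⟨σ i, ?_, ?_⟩
      · have hcv : colN σ i = colN σ j := congrArg Fin.val h2
        rcases lt_trichotomy (σ i) (σ j) with h | h | h
        · exact h
        · exact absurd (cell_inj h hcv) (ne_of_lt h1)
        · exact absurd (col_mono hσ h hcv.symm) (by omega)
      · rw [← h2]; exact EF_cellF hσ i
    · rintro ⟨r, hr, rfl⟩
      have hs : σ (EF hσ (r, tcol hσ j)) = r := sigma_EF hσ _
      have hc : colN σ (EF hσ (r, tcol hσ j)) = colN σ j := col_EF hσ _
      exact ⟨col_mono hσ (by rw [hs]; exact hr) hc, Fin.ext hc⟩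
  rw [colN, hset, Finset.card_image_of_injOn]
  · have h2 : (Finset.univ.filter fun r : Fin q => r < σ j) = Finset.Iio (σ j) := by
      ext r; simp
    rw [h2, Fin.card_Iio]
  · intro r hr r' hr' he
    have := EF_inj hσ he
    exact (Prod.ext_iff.mp this).1


lemma comp_card (hσ : BallotG m σ) :
    (Finset.univ.filter fun jk : Fin N × Fin N =>
        jk.1 < jk.2 ∧ ¬ σ jk.2 < σ jk.1 ∧ ¬ tcol hσ jk.2 < tcol hσ jk.1).card
    = (Finset.univ.filter fun xy : (Fin q × Fin m) × (Fin q × Fin m) =>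
        xy.1 ≠ xy.2 ∧ xy.1.1 ≤ xy.2.1 ∧ xy.1.2 ≤ xy.2.2).card := by
  apply Finset.card_nbij (fun jk => (cellF hσ jk.1, cellF hσ jk.2))
  · intro jk hjk
    simp only [Finset.mem_coe, mem_filter, mem_univ, true_and, not_lt] at hjk ⊢
    obtain ⟨h1, h2, h3⟩ := hjk
    refine ⟨?_, h2, h3⟩
    intro he
    have : jk.1 = jk.2 := (cellF_bij hσ).1 he
    exact absurd this (ne_of_lt h1)
  · intro jk _ jk' _ he
    have h1 : jk.1 = jk'.1 := (cellF_bij hσ).1 (Prod.ext_iff.mp he).1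
    have h2 : jk.2 = jk'.2 := (cellF_bij hσ).1 (Prod.ext_iff.mp he).2
    exact Prod.ext h1 h2
  · intro xy hxy
    simp only [Finset.coe_filter, Set.mem_setOf_eq, mem_univ, true_and] at hxy
    obtain ⟨h1, h2, h3⟩ := hxy
    refine ⟨(EF hσ xy.1, EF hσ xy.2), ?_, ?_⟩
    · simp only [Finset.coe_filter, Set.mem_setOf_eq, mem_univ, true_and, not_lt]
      have hs1 : σ (EF hσ xy.1) = xy.1.1 := sigma_EF hσ _
      have hs2 : σ (EF hσ xy.2) = xy.2.1 := sigma_EF hσ _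
      have hc1 : colN σ (EF hσ xy.1) = xy.1.2 := col_EF hσ _
      have hc2 : colN σ (EF hσ xy.2) = xy.2.2 := col_EF hσ _
      have hne : EF hσ xy.1 ≠ EF hσ xy.2 := fun he => h1 (EF_inj hσ he)
      refine ⟨lt_of_cell_le hσ (by rw [hs1, hs2]; exact h2)
        (by rw [hc1, hc2]; exact h3) hne, by rw [hs1, hs2]; exact h2, ?_⟩
      show tcol hσ (EF hσ xy.1) ≤ tcol hσ (EF hσ xy.2)
      have : (tcol hσ (EF hσ xy.1) : ℕ) ≤ (tcol hσ (EF hσ xy.2) : ℕ) := by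
        show colN σ (EF hσ xy.1) ≤ colN σ (EF hσ xy.2)
        rw [hc1, hc2]; exact h3
      exact this
    · show (cellF hσ (EF hσ xy.1), cellF hσ (EF hσ xy.2)) = xy
      rw [cellF_EF, cellF_EF]

lemma inv_split (hσ : BallotG m σ) :
    (Finset.univ.filter fun jk : Fin N × Fin N => jk.1 < jk.2 ∧ σ jk.2 < σ jk.1).card
      + (Finset.univ.filter fun jk : Fin N × Fin N =>
          jk.1 < jk.2 ∧ tcol hσ jk.2 < tcol hσ jk.1).card
      + (Finset.univ.filter fun xy : (Fin q × Fin m) × (Fin q × Fin m) =>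
          xy.1 ≠ xy.2 ∧ xy.1.1 ≤ xy.2.1 ∧ xy.1.2 ≤ xy.2.2).card
    = (Finset.univ.filter fun jk : Fin N × Fin N => jk.1 < jk.2).card := by
  classical
  have key : ∀ jk : Fin N × Fin N, jk.1 < jk.2 → tcol hσ jk.2 < tcol hσ jk.1 →
      ¬ σ jk.2 < σ jk.1 := by
    intro jk h1 h2 h3
    have h2' : colN σ jk.2 ≤ colN σ jk.1 := le_of_lt h2
    have := lt_of_cell_le hσ (le_of_lt h3) h2' (ne_of_gt h1)
    exact absurd (h1.trans this) (lt_irrefl _)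
  have split1 := Finset.card_filter_add_card_filter_not
    (s := Finset.univ.filter fun jk : Fin N × Fin N => jk.1 < jk.2)
    (p := fun jk => σ jk.2 < σ jk.1)
  have split2 := Finset.card_filter_add_card_filter_not
    (s := (Finset.univ.filter fun jk : Fin N × Fin N => jk.1 < jk.2).filter
      fun jk => ¬ σ jk.2 < σ jk.1)
    (p := fun jk => tcol hσ jk.2 < tcol hσ jk.1)
  have e1 : (Finset.univ.filter fun jk : Fin N × Fin N => jk.1 < jk.2).filter
      (fun jk => σ jk.2 < σ jk.1)
      = Finset.univ.filter fun jk => jk.1 < jk.2 ∧ σ jk.2 < σ jk.1 := by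
    rw [Finset.filter_filter]
  have e2 : ((Finset.univ.filter fun jk : Fin N × Fin N => jk.1 < jk.2).filter
      (fun jk => ¬ σ jk.2 < σ jk.1)).filter (fun jk => tcol hσ jk.2 < tcol hσ jk.1)
      = Finset.univ.filter fun jk => jk.1 < jk.2 ∧ tcol hσ jk.2 < tcol hσ jk.1 := by
    ext jk
    simp only [Finset.mem_filter, mem_univ, true_and]
    have := key jk
    tauto
  have e3 : ((Finset.univ.filter fun jk : Fin N × Fin N => jk.1 < jk.2).filter
      (fun jk => ¬ σ jk.2 < σ jk.1)).filter (fun jk => ¬ tcol hσ jk.2 < tcol hσ jk.1)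
      = Finset.univ.filter fun jk =>
          jk.1 < jk.2 ∧ ¬ σ jk.2 < σ jk.1 ∧ ¬ tcol hσ jk.2 < tcol hσ jk.1 := by
    ext jk
    simp only [Finset.mem_filter, mem_univ, true_and]
    tauto
  rw [e1] at split1
  rw [e2, e3] at split2
  rw [comp_card hσ] at split2
  omega

section transport

lemma colN_cast {a b r : ℕ} (h : a = b) (g : Fin b → Fin r) (j : Fin b) :
    colN (fun i : Fin a => g (Fin.cast h i)) (Fin.cast h.symm j) = colN g j := by
  apply Finset.card_equiv (finCongr h)
  intro i
  simp only [mem_filter, mem_univ, true_and]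
  exact Iff.rfl

end transport

open scoped Classical in
/-- The transposition map on ballot sequences. -/
noncomputable def Tmap (m p : ℕ) (σ : Fin (m * p) → Fin p) : Fin (p * m) → Fin m :=
  if h : IsBallot m p σ then
    fun j => tcol ((isBallot_iff m p σ).mp h) (Fin.cast (Nat.mul_comm p m) j)
  else fun j => ⟨0, by
    have h1 : 0 < p * m := j.pos
    rcases Nat.eq_zero_or_pos m with h2 | h2
    · subst h2; simp at h1
    · exact h2⟩

lemma Tmap_pos {m p : ℕ} {σ : Fin (m * p) → Fin p} (h : IsBallot m p σ) :
    Tmap m p σ = fun j => tcol ((isBallot_iff m p σ).mp h) (Fin.cast (Nat.mul_comm p m) j) := by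
  unfold Tmap
  exact dif_pos h

lemma Tmap_ballot {m p : ℕ} {σ : Fin (m * p) → Fin p} (hσ : IsBallot m p σ) :
    IsBallot p m (Tmap m p σ) := by
  have hσ' := (isBallot_iff m p σ).mp hσ
  have hb := ballot_tcol hσ'
  rw [isBallot_iff]
  rw [Tmap_pos hσ]
  constructor
  · intro c
    have e1 : (Finset.univ.filter fun j : Fin (p*m) =>
        tcol hσ' (Fin.cast (Nat.mul_comm p m) j) = c).card
        = (Finset.univ.filter fun j : Fin (m*p) => tcol hσ' j = c).card := by
      apply Finset.card_equiv (finCongr (Nat.mul_comm p m))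
      intro j
      simp only [mem_filter, mem_univ, true_and]
      exact Iff.rfl
    rw [e1]
    exact hb.1 c
  · intro n c c' hcc'
    have e1 : ∀ d : Fin m, (Finset.univ.filter fun j : Fin (p*m) =>
        j ≤ n ∧ tcol hσ' (Fin.cast (Nat.mul_comm p m) j) = d).card
        = (Finset.univ.filter fun j : Fin (m*p) =>
            j ≤ Fin.cast (Nat.mul_comm p m) n ∧ tcol hσ' j = d).card := by
      intro d
      apply Finset.card_equiv (finCongr (Nat.mul_comm p m))
      intro j
      simp only [mem_filter, mem_univ, true_and]
      exact Iff.rfl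
    rw [e1 c, e1 c']
    exact hb.2 (Fin.cast (Nat.mul_comm p m) n) c c' hcc'

lemma Tmap_Tmap {m p : ℕ} {σ : Fin (m * p) → Fin p} (hσ : IsBallot m p σ) :
    Tmap p m (Tmap m p σ) = σ := by
  have hσ' := (isBallot_iff m p σ).mp hσ
  have hτ : IsBallot p m (Tmap m p σ) := Tmap_ballot hσ
  have hτ' := (isBallot_iff p m _).mp hτ
  funext j
  rw [Tmap_pos hτ]
  apply Fin.ext
  show colN (Tmap m p σ) (Fin.cast (Nat.mul_comm m p) j) = (σ j : ℕ)
  have h1 : colN (Tmap m p σ) (Fin.cast (Nat.mul_comm m p) j) = colN (tcol hσ') j := by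
    rw [Tmap_pos hσ]
    exact colN_cast (Nat.mul_comm p m) (tcol ((isBallot_iff m p σ).mp hσ)) j
  rw [h1]
  exact col_tcol hσ' j

lemma invCount_Tmap {m p : ℕ} {σ : Fin (m * p) → Fin p} (hσ : IsBallot m p σ) :
    invCount p m (Tmap m p σ)
      = (Finset.univ.filter fun jk : Fin (m*p) × Fin (m*p) =>
          jk.1 < jk.2 ∧ tcol ((isBallot_iff m p σ).mp hσ) jk.2
            < tcol ((isBallot_iff m p σ).mp hσ) jk.1).card := by
  have hσ' := (isBallot_iff m p σ).mp hσ
  simp only [invCount]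
  rw [Tmap_pos hσ]
  apply Finset.card_equiv
    (Equiv.prodCongr (finCongr (Nat.mul_comm p m)) (finCongr (Nat.mul_comm p m)))
  intro jk
  simp only [mem_filter, mem_univ, true_and, Equiv.prodCongr_apply, Prod.map]
  exact Iff.rfl

lemma key_count {m p : ℕ} {σ : Fin (m * p) → Fin p} (hσ : IsBallot m p σ) :
    invCount m p σ + invCount p m (Tmap m p σ)
      + (Finset.univ.filter fun xy : (Fin p × Fin m) × (Fin p × Fin m) =>
          xy.1 ≠ xy.2 ∧ xy.1.1 ≤ xy.2.1 ∧ xy.1.2 ≤ xy.2.2).card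
    = (Finset.univ.filter fun jk : Fin (m*p) × Fin (m*p) => jk.1 < jk.2).card := by
  rw [invCount_Tmap hσ]
  exact inv_split ((isBallot_iff m p σ).mp hσ)

end BallotAux

/-- `I(m,p)` is symmetric: `I(m,p) = I(p,m)`. -/
theorem I_symm (m p : ℕ) (hm : 1 ≤ m) (hp : 1 ≤ p) :
    (ballotSum m p).natAbs = (ballotSum p m).natAbs := by
  classical
  open BallotAux in
  set D : ℕ := (Finset.univ.filter fun xy : (Fin p × Fin m) × (Fin p × Fin m) =>
      xy.1 ≠ xy.2 ∧ xy.1.1 ≤ xy.2.1 ∧ xy.1.2 ≤ xy.2.2).card with hD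
  set K : ℕ := (Finset.univ.filter fun jk : Fin (m*p) × Fin (m*p) => jk.1 < jk.2).card with hK
  have hsum : ballotSum m p = (-1 : ℤ)^(K + D) * ballotSum p m := by
    calc ballotSum m p
        = ∑ σ ∈ Finset.univ.filter (IsBallot m p), (-1 : ℤ)^invCount m p σ := by
          rw [ballotSum, Finset.sum_filter]
      _ = ∑ τ ∈ Finset.univ.filter (IsBallot p m),
            (-1 : ℤ)^(K + D) * (-1 : ℤ)^invCount p m τ := by
          apply Finset.sum_nbij' (BallotAux.Tmap m p) (BallotAux.Tmap p m)
          · intro σ hσ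
            simp only [Finset.mem_filter, Finset.mem_univ, true_and] at hσ ⊢
            exact BallotAux.Tmap_ballot hσ
          · intro τ hτ
            simp only [Finset.mem_filter, Finset.mem_univ, true_and] at hτ ⊢
            exact BallotAux.Tmap_ballot hτ
          · intro σ hσ
            simp only [Finset.mem_filter, Finset.mem_univ, true_and] at hσ
            exact BallotAux.Tmap_Tmap hσ
          · intro τ hτ
            simp only [Finset.mem_filter, Finset.mem_univ, true_and] at hτ
            exact BallotAux.Tmap_Tmap hτ
          · intro σ hσ
            simp only [Finset.mem_filter, Finset.mem_univ, true_and] at hσ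
            have hk := BallotAux.key_count hσ
            rw [← hD, ← hK] at hk
            have h2 : K + D + invCount p m (BallotAux.Tmap m p σ)
                = invCount m p σ + 2*(invCount p m (BallotAux.Tmap m p σ) + D) := by omega
            have h3 : ((-1 : ℤ))^(K + D) * (-1 : ℤ)^(invCount p m (BallotAux.Tmap m p σ))
                = (-1 : ℤ)^(invCount m p σ) := by
              rw [← pow_add, h2, pow_add, pow_mul]
              simp
            exact h3.symm
      _ = (-1 : ℤ)^(K + D) * ∑ τ ∈ Finset.univ.filter (IsBallot p m),
            (-1 : ℤ)^invCount p m τ := by rw [Finset.mul_sum]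
      _ = (-1 : ℤ)^(K + D) * ballotSum p m := by
          rw [ballotSum, Finset.sum_filter]
  rw [hsum, Int.natAbs_mul]
  simp [Int.natAbs_pow]
end

section
/- For every odd positive integer m, I(m,2) = d((m−1)/2, 2), the ((m−1)/2)-th Catalan number: |Σ_{σ ∈ Σ_{m,2}} (−1)^{inv σ}| = C((m−1)/2), where C(k) = (1/(k+1))·binom(2k,k). -/
open List DyckStep

def invL : List DyckStep → ℕ
  | [] => 0
  | U :: l => invL l
  | D :: l => l.count U + invL l

/-- Dyck lists of semilength `n`, built by first-return decomposition. -/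
def DF : ℕ → Finset (List DyckStep)
  | 0 => {[]}
  | n+1 => (Finset.range (n+1)).attach.biUnion fun k =>
      ((DF k.1) ×ˢ (DF (n - k.1))).image fun x => U :: x.1 ++ D :: x.2
decreasing_by
  · exact Nat.lt_succ_of_le (Nat.le_of_lt_succ (Finset.mem_range.mp k.2))
  · omega

@[simp] lemma DF_zero : DF 0 = {[]} := by rw [DF]

lemma mem_DF_succ {n : ℕ} {l : List DyckStep} :
    l ∈ DF (n+1) ↔ ∃ k ≤ n, ∃ a ∈ DF k, ∃ b ∈ DF (n-k), l = U :: a ++ D :: b := by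
  rw [DF]
  simp only [Finset.mem_biUnion, Finset.mem_attach, true_and, Subtype.exists,
    Finset.mem_range, Finset.mem_image, Finset.mem_product, Prod.exists]
  constructor
  · rintro ⟨k, hk, a, b, ⟨ha, hb⟩, rfl⟩
    exact ⟨k, by omega, a, ha, b, hb, rfl⟩
  · rintro ⟨k, hk, a, ha, b, hb, rfl⟩
    exact ⟨k, by omega, a, b, ⟨ha, hb⟩, rfl⟩

lemma count_U_add_count_D (l : List DyckStep) : l.count U + l.count D = l.length := by
  induction l with
  | nil => simp
  | cons b t ih => cases b <;> simp [count_cons, ← ih] <;> ring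

lemma DF_spec : ∀ n, ∀ l ∈ DF n, l.count U = n ∧ l.count D = n ∧
    ∀ i, (l.take i).count D ≤ (l.take i).count U := by
  intro n
  induction n using Nat.strong_induction_on with
  | _ n ih =>
    match n with
    | 0 => intro l hl; simp at hl; subst hl; simp
    | n+1 =>
      intro l hl
      rw [mem_DF_succ] at hl
      obtain ⟨k, hk, a, ha, b, hb, rfl⟩ := hl
      obtain ⟨haU, haD, hapre⟩ := ih k (by omega) a ha
      obtain ⟨hbU, hbD, hbpre⟩ := ih (n-k) (by omega) b hb
      have hlen : a.length = 2 * k := by have := count_U_add_count_D a; omega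
      refine ⟨by simp [count_cons, count_append, haU, hbU]; omega,
              by simp [count_cons, count_append, haD, hbD]; omega, ?_⟩
      intro i
      have hsplit : (U :: a ++ D :: b).take i
          = [U].take i ++ (a.take (i-1) ++ ([D].take (i-1-a.length) ++ b.take (i-1-a.length-1))) := by
        rw [show (U :: a ++ D :: b) = [U] ++ (a ++ ([D] ++ b)) by simp,
          take_append, take_append, take_append]
        simp
      rw [hsplit]
      simp only [count_append]
      rcases Nat.lt_or_ge i 1 with hi | hi
      · interval_cases i; simp
      rcases Nat.lt_or_ge (i-1) (a.length+1) with hia | hia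
      · have h1 : [U].take i = [U] := by
          rw [take_of_length_le]; simpa using hi
        have h2 : i - 1 - a.length - 1 = 0 := by omega
        have h3 : ([D].take (i-1-a.length)).count D ≤ 1 := by
          apply le_trans count_le_length; simp [length_take]
        have := hapre (i-1)
        simp [h1, h2] at *
        omega
      · have h1 : [U].take i = [U] := by
          rw [take_of_length_le]; simpa using hi
        have h2 : a.take (i-1) = a := take_of_length_le (by omega)
        have h3 : [D].take (i-1-a.length) = [D] := take_of_length_le (by simpa using by omega)
        have := hbpre (i-1-a.length-1)
        simp [h1, h2, h3] at *
        omega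

lemma DF_length {n : ℕ} {l : List DyckStep} (hl : l ∈ DF n) : l.length = 2 * n := by
  obtain ⟨h1, h2, _⟩ := DF_spec n l hl
  have := count_U_add_count_D l; omega
lemma invL_cons (b : DyckStep) (l : List DyckStep) :
    invL (b :: l) = (if b = D then l.count U else 0) + invL l := by
  cases b <;> simp [invL]

lemma invL_append (x y : List DyckStep) :
    invL (x ++ y) = invL x + invL y + x.count D * y.count U := by
  induction x with
  | nil => simp [invL]
  | cons b t ih =>
      rw [cons_append, invL_cons, invL_cons, ih, count_cons, count_append]
      cases b <;> simp <;> ring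

lemma invL_part {k j : ℕ} {a b : List DyckStep} (haD : a.count D = k) (hbU : b.count U = j) :
    invL (U :: a ++ D :: b) = invL a + invL b + (k+1)*j := by
  have : U :: a ++ D :: b = (U :: a) ++ (D :: b) := by simp
  rw [this, invL_append, invL_cons, invL_cons, count_cons, count_cons]
  simp [haD, hbU]
  ring

/-- decomposition pieces of different semilengths give different words -/
lemma DF_ne {k k' : ℕ} {a b a' b' : List DyckStep}
    (ha : a ∈ DF k) (ha' : a' ∈ DF k') (hkk : k < k') :
    U :: a ++ D :: b ≠ U :: a' ++ D :: b' := by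
  intro h
  have hlen : a.length = 2 * k := DF_length ha
  have hlen' : a'.length = 2 * k' := DF_length ha'
  have h2 : a ++ D :: b = a' ++ D :: b' := by simpa using h
  have h3 : a'.take (2*k+1) = a ++ [D] := by
    have := congrArg (fun l => List.take (2*k+1) l) h2
    simp only [take_append] at this
    rw [take_of_length_le (by omega), show 2*k+1 - a.length = 1 by omega,
      show 2*k+1 - a'.length = 0 by omega] at this
    simpa using this.symm
  obtain ⟨hU', hD', hpre'⟩ := DF_spec _ a' ha'
  obtain ⟨hU, hD, _⟩ := DF_spec _ a ha
  have := hpre' (2*k+1)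
  rw [h3] at this
  simp [count_append, hU, hD] at this
lemma DF_disj (n : ℕ) : (Set.PairwiseDisjoint ↑(Finset.range (n+1)).attach
    fun k : {x // x ∈ Finset.range (n+1)} =>
      ((DF k.1) ×ˢ (DF (n - k.1))).image fun x => U :: x.1 ++ D :: x.2) := by
  intro k _ k' _ hne
  apply Finset.disjoint_left.mpr
  intro l hl hl'
  simp only [Finset.mem_image, Finset.mem_product, Prod.exists] at hl hl'
  obtain ⟨a, b, ⟨ha, hb⟩, rfl⟩ := hl
  obtain ⟨a', b', ⟨ha', hb'⟩, heq⟩ := hl'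
  have hkk : k.1 ≠ k'.1 := fun h => hne (Subtype.ext h)
  rcases hkk.lt_or_gt with h | h
  · exact DF_ne ha ha' h heq.symm
  · exact DF_ne ha' ha h heq

/-- The signed sum over Dyck words of semilength `n`. -/
def dS (n : ℕ) : ℤ := ∑ l ∈ DF n, (-1) ^ invL l

@[simp] lemma dS_zero : dS 0 = 1 := by simp [dS, invL]

lemma dS_succ (n : ℕ) : dS (n+1) =
    ∑ k ∈ Finset.range (n+1), (-1)^((k+1)*(n-k)) * dS k * dS (n-k) := by
  rw [dS, DF, Finset.sum_biUnion (DF_disj n), ← Finset.sum_attach (Finset.range (n+1))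
    (fun k => (-1:ℤ)^((k+1)*(n-k)) * dS k * dS (n-k))]
  refine Finset.sum_congr rfl fun k _ => ?_
  rw [Finset.sum_image ?inj]
  case inj =>
    rintro ⟨a, b⟩ hab ⟨a', b'⟩ hab' h
    simp only [Finset.mem_coe, Finset.mem_product] at hab hab'
    have hlen : a.length = a'.length := by rw [DF_length hab.1, DF_length hab'.1]
    have h2 : a ++ D :: b = a' ++ D :: b' := by simpa using h
    obtain ⟨h3, h4⟩ := List.append_inj h2 hlen
    simp [h3, Prod.ext_iff]
    exact List.cons_injective h4
  rw [Finset.sum_product, dS, dS, mul_assoc, Finset.sum_mul_sum, Finset.mul_sum]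
  refine Finset.sum_congr rfl fun a ha => ?_
  rw [Finset.mul_sum]
  refine Finset.sum_congr rfl fun b hb => ?_
  rw [invL_part (DF_spec _ a ha).2.1 (DF_spec _ b hb).1, pow_add, pow_add]
  ring
lemma dS_val (n : ℕ) :
    dS n = if n = 0 then 1 else if n % 2 = 0 then 0 else (catalan ((n-1)/2) : ℤ) := by
  induction n using Nat.strong_induction_on with
  | _ n ih =>
    match n with
    | 0 => simp
    | m+1 =>
      rw [dS_succ]
      rcases Nat.even_or_odd m with hm | hm
      · -- m even, say m = j + j; the sum is catalan j
        obtain ⟨j, rfl⟩ := hm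
        have hj2 : (j + j + 1) % 2 = 1 := by omega
        simp only [Nat.add_eq_zero, Nat.succ_ne_zero, and_false, if_false, hj2,
          Nat.one_ne_zero, show (j+j+1-1)/2 = j by omega]
        rcases Nat.eq_zero_or_pos j with rfl | hj
        · simp
        · have hzero : ∀ k ∈ Finset.range (j+j+1), k % 2 = 0 →
              (-1:ℤ)^((k+1)*(j+j-k)) * dS k * dS (j+j-k) = 0 := by
            intro k hk hk2
            rcases Nat.eq_zero_or_pos k with rfl | hkpos
            · have : dS (j+j) = 0 := by
                rw [ih (j+j) (by omega), if_neg (by omega), if_pos (by omega)]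
              simp [this]
            · have : dS k = 0 := by
                rw [ih k (Finset.mem_range.mp hk), if_neg (by omega), if_pos hk2]
              simp [this]
          rw [← Finset.sum_filter_of_ne (p := fun k => k % 2 = 1)
            (by intro x hx hfx; by_contra h; exact hfx (hzero x hx (by omega)))]
          have hqb : ∑ k ∈ (Finset.range (j+j+1)).filter (fun k => k % 2 = 1),
              (-1:ℤ)^((k+1)*(j+j-k)) * dS k * dS (j+j-k)
              = ∑ i ∈ Finset.range j, (catalan i : ℤ) * catalan (j - 1 - i) := by
            refine Finset.sum_nbij' (i := fun k => (k-1)/2) (j := fun i => 2*i+1)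
              ?_ ?_ ?_ ?_ ?_
            · intro k hk
              simp only [Finset.mem_filter, Finset.mem_range] at hk ⊢
              omega
            · intro i hi
              simp only [Finset.mem_filter, Finset.mem_range] at hi ⊢
              omega
            · intro k hk
              simp only [Finset.mem_filter, Finset.mem_range] at hk
              omega
            · intro i hi; omega
            · intro k hk
              simp only [Finset.mem_filter, Finset.mem_range] at hk
              obtain ⟨i, rfl⟩ : ∃ i, k = 2*i+1 := ⟨(k-1)/2, by omega⟩
              have hsign : (-1:ℤ)^((2*i+1+1)*(j+j-(2*i+1))) = 1 :=
                Even.neg_one_pow (Even.mul_right (show Even (2*i+1+1) from ⟨i+1, by omega⟩) _)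
              have h1 : dS (2*i+1) = (catalan i : ℤ) := by
                rw [ih _ hk.1, if_neg (by omega), if_neg (by omega),
                  show (2*i+1-1)/2 = i by omega]
              have h2 : dS (j+j-(2*i+1)) = (catalan (j-1-i) : ℤ) := by
                rw [ih _ (by omega), if_neg (by omega), if_neg (by omega),
                  show (j+j-(2*i+1)-1)/2 = j-1-i by omega]
              rw [hsign, h1, h2, one_mul, show (2*i+1-1)/2 = i by omega]
          rw [hqb]
          obtain ⟨j', rfl⟩ : ∃ j', j = j'+1 := ⟨j-1, by omega⟩
          rw [catalan_succ,
            show ∑ i : Fin j'.succ, catalan i * catalan (j'-i)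
              = ∑ i ∈ Finset.range j'.succ, catalan i * catalan (j'-i)
              from Fin.sum_univ_eq_sum_range (fun k => catalan k * catalan (j'-k)) j'.succ, Nat.cast_sum]
          refine Finset.sum_congr rfl fun i hi => ?_
          rw [show j'+1-1-i = j'-i by omega]
          push_cast
          ring
      · -- m odd: reflection pairing kills the sum
        obtain ⟨j, hmj⟩ := hm
        have hm2 : (m+1) % 2 = 0 := by omega
        simp only [Nat.succ_ne_zero, if_false, hm2, if_true]
        have key : ∀ k ≤ m, (-1:ℤ)^((m-k+1)*(m-(m-k))) * dS (m-k) * dS (m-(m-k))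
            = -((-1:ℤ)^((k+1)*(m-k)) * dS k * dS (m-k)) := by
          intro k hk
          have hmk : m - (m-k) = k := by omega
          rw [hmk]
          have hsign : (-1:ℤ)^((m-k+1)*k) = -((-1:ℤ)^((k+1)*(m-k))) := by
            rcases Nat.even_or_odd k with hp | hp
            · have hk2 := Nat.even_iff.mp hp
              have e1 : Even ((m-k+1)*k) := hp.mul_left _
              have e2 : Odd ((k+1)*(m-k)) :=
                Nat.odd_mul.mpr ⟨Nat.odd_iff.mpr (by omega), Nat.odd_iff.mpr (by omega)⟩
              simp [e1.neg_one_pow, e2.neg_one_pow]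
            · have hk2 := Nat.odd_iff.mp hp
              have e1 : Odd ((m-k+1)*k) :=
                Nat.odd_mul.mpr ⟨Nat.odd_iff.mpr (by omega), Nat.odd_iff.mpr (by omega)⟩
              have e2 : Even ((k+1)*(m-k)) := (Nat.even_iff.mpr (by omega)).mul_right _
              simp [e1.neg_one_pow, e2.neg_one_pow]
          rw [hsign]
          ring
        have hrefl := Finset.sum_range_reflect
          (fun k => (-1:ℤ)^((k+1)*(m-k)) * dS k * dS (m-k)) (m+1)
        simp only [Nat.add_sub_cancel] at hrefl
        have : ∑ k ∈ Finset.range (m+1), (-1:ℤ)^((k+1)*(m-k)) * dS k * dS (m-k)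
            = -∑ k ∈ Finset.range (m+1), (-1:ℤ)^((k+1)*(m-k)) * dS k * dS (m-k) := by
          conv_lhs => rw [← hrefl]
          rw [← Finset.sum_neg_distrib]
          refine Finset.sum_congr rfl fun k hk => ?_
          exact key k (by simp at hk; omega)
        linarith
lemma toList_add (a b : DyckWord) : (a + b).toList = a.toList ++ b.toList := rfl

lemma mem_DF_of_dyck : ∀ n (p : DyckWord), p.semilength = n → p.toList ∈ DF n := by
  intro n
  induction n using Nat.strong_induction_on with
  | _ n ih =>
    intro p hp
    by_cases h0 : p = 0
    · subst h0
      have : n = 0 := by simpa using hp.symm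
      subst this
      simp only [DF_zero, Finset.mem_singleton]
      rfl
    · have hdec := DyckWord.nest_insidePart_add_outsidePart h0
      have hsemi := DyckWord.semilength_insidePart_add_semilength_outsidePart_add_one h0
      set a := p.insidePart with ha
      set b := p.outsidePart with hb
      have hn : n = a.semilength + b.semilength + 1 := by omega
      subst hn
      apply mem_DF_succ.mpr
      refine ⟨a.semilength, by omega, a.toList, ih _ (by omega) a rfl, b.toList, ?_, ?_⟩
      · rw [show a.semilength + b.semilength - a.semilength = b.semilength by omega]
        exact ih _ (by omega) b rfl
      · conv_lhs => rw [← hdec]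
        rw [toList_add]
        show a.nest.toList ++ b.toList = _
        show ([U] ++ a.toList ++ [D]) ++ b.toList = _
        simp
lemma count_take_ofFn {N : ℕ} (f : Fin N → DyckStep) (x : DyckStep) (k : ℕ) :
    ((List.ofFn f).take k).count x
      = ∑ j : Fin N, if j.val < k ∧ f j = x then 1 else 0 := by
  induction N generalizing k with
  | zero => simp
  | succ N ihN =>
    rw [List.ofFn_succ]
    cases k with
    | zero => simp
    | succ k =>
      rw [List.take_succ_cons, List.count_cons, ihN (fun i => f i.succ) k,
        Fin.sum_univ_succ]
      simp only [Fin.val_succ, Fin.val_zero, Nat.succ_lt_succ_iff, Nat.zero_lt_succ, true_and]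
      rcases eq_or_ne (f 0) x with h | h <;> simp [h, Nat.add_comm]
lemma count_ofFn {N : ℕ} (f : Fin N → DyckStep) (x : DyckStep) :
    (List.ofFn f).count x = ∑ j : Fin N, if f j = x then 1 else 0 := by
  have := count_take_ofFn f x N
  rw [List.take_of_length_le (by simp)] at this
  rw [this]
  exact Finset.sum_congr rfl fun j _ => by simp [j.isLt]

lemma invL_ofFn {N : ℕ} (f : Fin N → DyckStep) :
    invL (List.ofFn f) = ∑ j : Fin N,
      if f j = D then (∑ k : Fin N, if j < k ∧ f k = U then 1 else 0) else 0 := by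
  induction N with
  | zero => simp [invL]
  | succ N ihN =>
    rw [List.ofFn_succ, invL_cons, ihN (fun i => f i.succ), Fin.sum_univ_succ,
      count_ofFn]
    congr 1
    · -- head term
      rcases eq_or_ne (f 0) D with h | h
      · rw [if_pos h, if_pos h, Fin.sum_univ_succ,
          if_neg (show ¬((0:Fin (N+1)) < 0 ∧ f 0 = U) by simp), zero_add]
        refine Finset.sum_congr rfl fun k _ => ?_
        congr 1
        simp [Fin.succ_pos]
      · rw [if_neg h, if_neg h]
    · refine Finset.sum_congr rfl fun j _ => ?_
      rcases eq_or_ne (f j.succ) D with h | h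
      · rw [if_pos h, if_pos h, Fin.sum_univ_succ]
        have h0 : ¬ (j.succ < (0 : Fin (N+1)) ∧ f 0 = U) := by
          rintro ⟨hc, -⟩; exact absurd hc (by simp [Fin.lt_def])
        rw [if_neg h0, zero_add]
        refine Finset.sum_congr rfl fun k _ => ?_
        congr 1
        simp [Fin.succ_lt_succ_iff]
      · rw [if_neg h, if_neg h]
/-- step map -/
def stp : Fin 2 → DyckStep := fun i => if i = 0 then U else D

lemma fin2 (i : Fin 2) : i = 0 ∨ i = 1 := by revert i; decide

lemma stp_eq_U {x : Fin 2} : stp x = U ↔ x = 0 := by revert x; decide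
lemma stp_eq_D {x : Fin 2} : stp x = D ↔ x = 1 := by revert x; decide
lemma stp_inj_iff {x y : Fin 2} : stp x = stp y ↔ x = y := by revert x y; decide

lemma ofFn_get_cast {α} (l : List α) {N : ℕ} (h : N = l.length) :
    List.ofFn (fun j : Fin N => l.get (Fin.cast h j)) = l := by
  subst h; exact List.ofFn_get l

lemma invCount_eq {m : ℕ} (σ : Fin (m*2) → Fin 2) :
    invCount m 2 σ = invL (List.ofFn fun j => stp (σ j)) := by
  rw [invL_ofFn, invCount, Finset.card_filter, Fintype.sum_prod_type]
  refine Finset.sum_congr rfl fun j _ => ?_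
  rcases fin2 (σ j) with h | h
  · rw [if_neg (by simp [h, stp])]
    refine Finset.sum_eq_zero fun k _ => ?_
    rw [if_neg]
    rintro ⟨-, hc⟩
    rw [h] at hc
    exact Fin.not_lt_zero _ hc
  · rw [if_pos (by simp [h, stp])]
    refine Finset.sum_congr rfl fun k _ => ?_
    refine if_congr (and_congr_right fun _ => ?_) rfl rfl
    rw [h, stp_eq_U]
    constructor
    · intro hc; rcases fin2 (σ k) with h' | h'
      · exact h'
      · rw [h'] at hc; exact absurd hc (by decide)
    · intro hc; rw [hc]; decide

lemma ballotSum_eq_dS (m : ℕ) : ballotSum m 2 = dS m := by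
  classical
  rw [ballotSum, dS, ← Finset.sum_filter]
  refine Finset.sum_bij (fun σ _ => List.ofFn (fun j => stp (σ j))) ?_ ?_ ?_ ?_
  · -- maps into DF m
    intro σ hσ
    have hb : IsBallot m 2 σ := (Finset.mem_filter.mp hσ).2
    have hU : (List.ofFn fun j => stp (σ j)).count U = m := by
      rw [count_ofFn,
        Finset.sum_congr rfl fun (j : Fin (m*2)) _ => if_congr stp_eq_U rfl rfl,
        ← Finset.card_filter]
      exact hb.1 0
    have hD : (List.ofFn fun j => stp (σ j)).count D = m := by
      rw [count_ofFn,
        Finset.sum_congr rfl fun (j : Fin (m*2)) _ => if_congr stp_eq_D rfl rfl,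
        ← Finset.card_filter]
      exact hb.1 1
    have hpre : ∀ i, ((List.ofFn fun j => stp (σ j)).take i).count D ≤
        ((List.ofFn fun j => stp (σ j)).take i).count U := by
      intro i
      rcases Nat.eq_zero_or_pos i with rfl | hi
      · simp
      rcases Nat.eq_zero_or_pos m with rfl | hm
      · rw [count_take_ofFn, count_take_ofFn]
        simp
      set n : Fin (m*2) := ⟨min (i-1) (m*2-1), by omega⟩ with hn
      have key := hb.2 n 0 1 (by decide)
      rw [Finset.card_filter, Finset.card_filter] at key
      rw [count_take_ofFn, count_take_ofFn]
      have hiff : ∀ (j : Fin (m*2)), (j.val < i ↔ j ≤ n) := by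
        intro j
        have hj := j.isLt
        rw [Fin.le_def, hn]
        simp only []
        omega
      calc (∑ j : Fin (m*2), if j.val < i ∧ stp (σ j) = D then 1 else 0)
          = ∑ j : Fin (m*2), if j ≤ n ∧ σ j = 1 then 1 else 0 :=
            Finset.sum_congr rfl fun j _ =>
              if_congr (and_congr (hiff j) stp_eq_D) rfl rfl
        _ ≤ ∑ j : Fin (m*2), if j ≤ n ∧ σ j = 0 then 1 else 0 := key
        _ = ∑ j : Fin (m*2), if j.val < i ∧ stp (σ j) = U then 1 else 0 :=
            Finset.sum_congr rfl fun j _ =>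
              if_congr (and_congr (hiff j).symm stp_eq_U.symm) rfl rfl
    exact mem_DF_of_dyck m ⟨_, hU.trans hD.symm, hpre⟩ hU
  · -- injective
    intro σ hσ σ' hσ' h
    funext j
    exact stp_inj_iff.mp (congrFun (List.ofFn_inj.mp h) j)
  · -- surjective
    intro l hl
    have hL : m * 2 = l.length := by rw [DF_length hl]; ring
    obtain ⟨hUl, hDl, hprel⟩ := DF_spec m l hl
    refine ⟨fun j => if l.get (Fin.cast hL j) = U then 0 else 1, ?_, ?_⟩
    case refine_2 =>
      show (List.ofFn fun j => stp (if l.get (Fin.cast hL j) = U then (0:Fin 2) else 1)) = l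
      have hkey : ∀ j : Fin (m*2),
          stp (if l.get (Fin.cast hL j) = U then (0:Fin 2) else 1) = l.get (Fin.cast hL j) := by
        intro j
        generalize l.get (Fin.cast hL j) = x
        rcases DyckStep.dichotomy x with rfl | rfl <;> simp [stp]
      rw [funext hkey]
      exact ofFn_get_cast l hL
    case refine_1 =>
      set σ : Fin (m*2) → Fin 2 :=
        fun j => if l.get (Fin.cast hL j) = U then 0 else 1 with hσdef
      have hkey : ∀ j : Fin (m*2), stp (σ j) = l.get (Fin.cast hL j) := by
        intro j
        show stp (if l.get (Fin.cast hL j) = U then (0:Fin 2) else 1) = l.get (Fin.cast hL j)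
        generalize l.get (Fin.cast hL j) = x
        rcases DyckStep.dichotomy x with rfl | rfl <;> simp [stp]
      have hofn : (List.ofFn fun j => stp (σ j)) = l := by
        rw [funext hkey]
        exact ofFn_get_cast l hL
      refine Finset.mem_filter.mpr ⟨Finset.mem_univ _, ?_, ?_⟩
      · intro i
        rw [Finset.card_filter]
        rcases fin2 i with rfl | rfl
        · rw [Finset.sum_congr rfl fun (j : Fin (m*2)) _ => if_congr stp_eq_U.symm rfl rfl,
            ← count_ofFn, hofn]
          exact hUl
        · rw [Finset.sum_congr rfl fun (j : Fin (m*2)) _ => if_congr stp_eq_D.symm rfl rfl,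
            ← count_ofFn, hofn]
          exact hDl
      · intro n i k hik
        obtain ⟨rfl, rfl⟩ : i = 0 ∧ k = 1 := by
          rcases fin2 i with rfl | rfl <;> rcases fin2 k with rfl | rfl <;>
            first | (exact ⟨rfl, rfl⟩) | (exact absurd hik (by decide))
        have hcmp := hprel (n.val + 1)
        rw [← hofn, count_take_ofFn, count_take_ofFn] at hcmp
        rw [Finset.card_filter, Finset.card_filter]
        have hiff : ∀ (j : Fin (m*2)), (j ≤ n ↔ j.val < n.val + 1) := by
          intro j
          rw [Fin.le_def]
          omega
        calc (∑ j : Fin (m*2), if j ≤ n ∧ σ j = 1 then 1 else 0)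
            = ∑ j : Fin (m*2), if j.val < n.val + 1 ∧ stp (σ j) = D then 1 else 0 :=
              Finset.sum_congr rfl fun j _ =>
                if_congr (and_congr (hiff j) stp_eq_D.symm) rfl rfl
          _ ≤ ∑ j : Fin (m*2), if j.val < n.val + 1 ∧ stp (σ j) = U then 1 else 0 := hcmp
          _ = ∑ j : Fin (m*2), if j ≤ n ∧ σ j = 0 then 1 else 0 :=
              Finset.sum_congr rfl fun j _ =>
                if_congr (and_congr (hiff j).symm stp_eq_U) rfl rfl
  · -- values
    intro σ hσ
    rw [invCount_eq]

/-- For odd `m`, `I(m,2)` equals the `((m-1)/2)`-th Catalan number. -/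
theorem I_m_two_eq_catalan (m : ℕ) (hm : 1 ≤ m) (hodd : Odd m) :
    (ballotSum m 2).natAbs = catalan ((m - 1) / 2) := by
  obtain ⟨j, rfl⟩ := hodd
  rw [ballotSum_eq_dS, dS_val, if_neg (by omega), if_neg (by omega),
    show (2*j+1-1)/2 = j by omega]
  simp
end
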